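/- arXiv:2107.11917 — 3 statements merged into one kernel-verified Lean document; each statement's English description precedes it below -/
import Mathlib

section
/- Let λ ∈ ℝ, T ∈ (0,∞], and let u : [0,T) × S¹ → ℝ be C³ in θ and C¹ in t (with the mixed partial derivatives u_tθ, u_tθθ continuous) solving the μ-λ equation with momentum m(t,θ) = σ − u_θθ(t,θ), where σ = ∫₀¹ u(t,θ) dθ (which is constant in t). Then the kinetic energy E(t) = ∫₀¹ u_θ(t,θ)² dθ satisfies E'(t) = −(λ−2) ∫₀¹ u_θ(t,θ)³ dθ for all t. In particular, if λ = 2 then E(t) is constant in t, and if λ = 2 or λ = 3 then I(t) = ((λ−3)/2) E(t) − λσ² is constant in t (equal to −3σ² when λ = 3). -/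
/-!
Differentiating under the integral sign gives `E'(t) = ∫₀¹ 2 u_θ u_tθ`. Along the equation,
`2 u_θ u_tθ + (λ - 2) u_θ³` is the `θ`-derivative of the periodic function
`2 u u_tθ + 2 u² u_θθ - λ σ u² + (λ - 2) u u_θ²`, so its integral over a period vanishes.

Time derivatives are only one-sided at `t = 0`, so the differentiation under the integral sign
is done on compact intervals `[0, b] ⊆ [0, T)`: there the time derivative, clamped to `[0, b]`,
is jointly continuous, and the fundamental theorem of calculus in time together with Fubini
applies. The same argument shows that `u_tθ` has `θ`-derivative `u_tθθ`. The conservation laws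
for `λ = 2, 3` then follow from the mean value theorem.
-/

open Set MeasureTheory Function Filter Topology

theorem integral_eq_sub_of_hasDerivWithinAt_of_ordConnected {S : Set ℝ} [S.OrdConnected]
    {f f' : ℝ → ℝ} {s t : ℝ} (hf : ∀ r ∈ S, HasDerivWithinAt f (f' r) S r)
    (hint : IntervalIntegrable f' volume t s) (ht : t ∈ S) (hs : s ∈ S) :
    ∫ r in t..s, f' r = f s - f t := by
  have hsub : uIcc t s ⊆ S := Set.OrdConnected.uIcc_subset ‹_› ht hs
  refine intervalIntegral.integral_eq_sub_of_hasDeriv_right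
    (fun r hr => (hf r (hsub hr)).continuousWithinAt.mono hsub) (fun r hr => ?_) hint
  have hS : S ∈ 𝓝 r := mem_of_superset (Ioo_mem_nhds hr.1 hr.2) (Ioo_subset_Icc_self.trans hsub)
  exact ((hf r (mem_of_mem_nhds hS)).hasDerivAt hS).hasDerivWithinAt

theorem intervalIntegral_intervalIntegral_swap_of_continuous {f : ℝ → ℝ → ℝ}
    (hf : Continuous (uncurry f)) (a b c d : ℝ) :
    ∫ x in a..b, ∫ y in c..d, f x y = ∫ y in c..d, ∫ x in a..b, f x y :=
  intervalIntegral_intervalIntegral_swap <|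
    (hf.continuousOn.integrableOn_compact (isCompact_uIcc.prod isCompact_uIcc)).mono_set
      (prod_mono uIoc_subset_uIcc uIoc_subset_uIcc)

theorem Function.Periodic.periodic_of_hasDerivAt {f f' : ℝ → ℝ} {c : ℝ} (hf : Periodic f c)
    (hf' : ∀ x, HasDerivAt f (f' x) x) : Periodic f' c := fun x => by
  have h := (hf' (x + c)).comp_add_const x c
  rw [hf.funext] at h
  exact h.unique (hf' x)

theorem Function.Periodic.integral_deriv_eq_zero {f f' : ℝ → ℝ} {c : ℝ} (hf : Periodic f c)
    (hf' : ∀ x, HasDerivAt f (f' x) x) (hint : IntervalIntegrable f' volume 0 c) :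
    ∫ x in 0..c, f' x = 0 := by
  rw [intervalIntegral.integral_eq_sub_of_hasDerivAt (fun x _ => hf' x) hint, hf.eq, sub_self]

theorem periodic_of_hasDerivWithinAt {S : Set ℝ} {F F' : ℝ → ℝ → ℝ} {c t : ℝ}
    (hF : ∀ s ∈ S, Periodic (F s) c) (hF' : ∀ θ, HasDerivWithinAt (F · θ) (F' t θ) S t)
    (hS : UniqueDiffWithinAt ℝ S t) (ht : t ∈ S) : Periodic (F' t) c := fun θ =>
  hS.eq_deriv _ ((hF' (θ + c)).congr (fun s hs => (hF s hs θ).symm) (hF t ht θ).symm) (hF' θ)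

section ParametricIcc

variable {a b : ℝ} {F F' : ℝ → ℝ → ℝ}

theorem ContinuousOn.continuous_comp_projIcc {f : ℝ → ℝ → ℝ} (hab : a ≤ b)
    (hf : ContinuousOn (uncurry f) (Icc a b ×ˢ univ)) :
    Continuous (uncurry fun r θ => f (projIcc a b hab r) θ) :=
  hf.comp_continuous (f := fun p : ℝ × ℝ => ((projIcc a b hab p.1 : ℝ), p.2))
    (by fun_prop) fun p => ⟨(projIcc a b hab p.1).2, mem_univ _⟩

theorem eq_add_integral_of_hasDerivWithinAt_Icc (hab : a ≤ b)
    (hF : ∀ θ, ∀ s ∈ Icc a b, HasDerivWithinAt (F · θ) (F' s θ) (Icc a b) s)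
    (hF' : ContinuousOn (uncurry F') (Icc a b ×ˢ univ)) {s t : ℝ} (hs : s ∈ Icc a b)
    (ht : t ∈ Icc a b) (θ : ℝ) :
    F s θ = F t θ + ∫ r in t..s, F' (projIcc a b hab r) θ := by
  have hF'θ : Continuous fun r => F' (projIcc a b hab r) θ :=
    (hF'.continuous_comp_projIcc hab).comp (continuous_id.prodMk continuous_const)
  rw [integral_eq_sub_of_hasDerivWithinAt_of_ordConnected (f := (F · θ)) (fun r hr => ?_)
    (hF'θ.intervalIntegrable _ _) ht hs]
  · ring
  · simpa only [projIcc_of_mem hab hr] using hF θ r hr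

theorem continuousOn_uncurry_of_hasDerivWithinAt_Icc (hab : a ≤ b)
    (hF : ∀ θ, ∀ s ∈ Icc a b, HasDerivWithinAt (F · θ) (F' s θ) (Icc a b) s)
    (hF' : ContinuousOn (uncurry F') (Icc a b ×ˢ univ)) (hFa : Continuous (F a)) :
    ContinuousOn (uncurry F) (Icc a b ×ˢ univ) := by
  have hprim := intervalIntegral.continuous_parametric_primitive_of_continuous (μ := volume)
    (a₀ := a) (f := fun θ r => F' (projIcc a b hab r) θ)
    ((hF'.continuous_comp_projIcc hab).comp continuous_swap)
  refine ((hFa.comp continuous_snd).add (hprim.comp continuous_swap)).continuousOn.congr ?_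
  rintro ⟨s, θ⟩ ⟨hs, -⟩
  exact eq_add_integral_of_hasDerivWithinAt_Icc hab hF hF' hs (left_mem_Icc.2 hab) θ

theorem hasDerivWithinAt_intervalIntegral_Icc {c d t : ℝ}
    (hF : ∀ θ, ∀ s ∈ Icc a b, HasDerivWithinAt (F · θ) (F' s θ) (Icc a b) s)
    (hF' : ContinuousOn (uncurry F') (Icc a b ×ˢ univ))
    (hFi : ∀ s ∈ Icc a b, IntervalIntegrable (F s) volume c d) (ht : t ∈ Icc a b) :
    HasDerivWithinAt (fun s => ∫ θ in c..d, F s θ) (∫ θ in c..d, F' t θ) (Icc a b) t := by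
  have hab : a ≤ b := ht.1.trans ht.2
  set G : ℝ → ℝ → ℝ := fun r θ => F' (projIcc a b hab r) θ with hG_def
  have hG : Continuous (uncurry G) := hF'.continuous_comp_projIcc hab
  have hprim : ∀ s ∈ Icc a b,
      ∫ θ in c..d, F s θ = (∫ θ in c..d, F t θ) + ∫ r in t..s, ∫ θ in c..d, G r θ := by
    intro s hs
    rw [intervalIntegral_intervalIntegral_swap_of_continuous hG, ← intervalIntegral.integral_add
      (hFi t ht) ((intervalIntegral.continuous_parametric_intervalIntegral_of_continuous'
        (f := fun θ r => G r θ) (hG.comp continuous_swap) t s).intervalIntegrable _ _)]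
    exact intervalIntegral.integral_congr fun θ _ =>
      eq_add_integral_of_hasDerivWithinAt_Icc hab hF hF' hs ht θ
  have hderiv : HasDerivAt (fun s => ∫ r in t..s, ∫ θ in c..d, G r θ) (∫ θ in c..d, F' t θ) t := by
    simpa only [hG_def, projIcc_of_mem hab ht] using
      ((intervalIntegral.continuous_parametric_intervalIntegral_of_continuous' hG c d
        ).integral_hasStrictDerivAt t t).hasDerivAt
  exact (hderiv.hasDerivWithinAt.const_add _).congr hprim (hprim t ht)

theorem hasDerivAt_of_mixed_partials_Icc {t : ℝ} {G Gθ Gt Gtθ : ℝ → ℝ → ℝ}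
    (hab : a < b) (hG : ∀ s ∈ Icc a b, ∀ θ, HasDerivAt (G s) (Gθ s θ) θ)
    (hGθ : ∀ s ∈ Icc a b, Continuous (Gθ s))
    (hGt : ∀ θ, ∀ s ∈ Icc a b, HasDerivWithinAt (G · θ) (Gt s θ) (Icc a b) s)
    (hGθt : ∀ θ, ∀ s ∈ Icc a b, HasDerivWithinAt (Gθ · θ) (Gtθ s θ) (Icc a b) s)
    (hGtθ : ContinuousOn (uncurry Gtθ) (Icc a b ×ˢ univ)) (ht : t ∈ Icc a b) (θ : ℝ) :
    HasDerivAt (Gt t) (Gtθ t θ) θ := by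
  -- differentiate `∫ φ in 0..x, Gθ s φ = G s x - G s 0` in `s`
  have hGt_eq : ∀ x, Gt t x = Gt t 0 + ∫ φ in 0..x, Gtθ t φ := by
    intro x
    have hFTC : ∀ s ∈ Icc a b, ∫ φ in 0..x, Gθ s φ = G s x - G s 0 := fun s hs =>
      intervalIntegral.integral_eq_sub_of_hasDerivAt (fun φ _ => hG s hs φ)
        ((hGθ s hs).intervalIntegrable _ _)
    have hleft := hasDerivWithinAt_intervalIntegral_Icc hGθt hGtθ
      (fun s hs => (hGθ s hs).intervalIntegrable 0 x) ht
    have hright := ((hGt x t ht).sub (hGt 0 t ht)).congr hFTC (hFTC t ht)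
    linarith [(uniqueDiffOn_Icc hab t ht).eq_deriv _ hright hleft]
  have hcont : Continuous (Gtθ t) :=
    hGtθ.comp_continuous (f := fun φ => (t, φ)) (by fun_prop) fun _ => ⟨ht, mem_univ _⟩
  rw [funext hGt_eq]
  exact ((hcont.integral_hasStrictDerivAt 0 θ).hasDerivAt).const_add _

end ParametricIcc

theorem integral_deriv_mul_eq_of_muLambda {lam σ : ℝ} {u u' u'' u''' v v' : ℝ → ℝ}
    (hu : Periodic u 1) (hv : Periodic v 1) (hu' : ∀ x, HasDerivAt u (u' x) x)
    (hu'' : ∀ x, HasDerivAt u' (u'' x) x) (hu''' : ∀ x, HasDerivAt u'' (u''' x) x)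
    (hv' : ∀ x, HasDerivAt v (v' x) x)
    (heq : ∀ x, -v' x + u x * -u''' x + lam * u' x * (σ - u'' x) = 0) :
    ∫ x in 0..1, 2 * u' x * v x = -(lam - 2) * ∫ x in 0..1, u' x ^ 3 := by
  have hu'p := hu.periodic_of_hasDerivAt hu'
  have hu''p := hu'p.periodic_of_hasDerivAt hu''
  have hu'c : Continuous u' := continuous_iff_continuousAt.2 fun x => (hu'' x).continuousAt
  have hvc : Continuous v := continuous_iff_continuousAt.2 fun x => (hv' x).continuousAt
  set Ψ : ℝ → ℝ := fun x =>
    2 * u x * v x + 2 * u x ^ 2 * u'' x - lam * σ * u x ^ 2 + (lam - 2) * u x * u' x ^ 2 with hΨ_def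
  have hΨ : ∀ x, HasDerivAt Ψ (2 * u' x * v x + (lam - 2) * u' x ^ 3) x := by
    intro x
    have h := (((((hu' x).const_mul (2 : ℝ)).mul (hv' x)).add
      ((((hu' x).pow 2).const_mul (2 : ℝ)).mul (hu''' x))).sub
      (((hu' x).pow 2).const_mul (lam * σ))).add
      (((hu' x).const_mul (lam - 2)).mul ((hu'' x).pow 2))
    refine h.congr_deriv ?_
    simp only [Pi.pow_apply]
    push_cast
    linear_combination (-2 * u x) * heq x
  have hΨp : Periodic Ψ 1 := fun x => by simp only [hΨ_def, hu x, hv x, hu'p x, hu''p x]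
  have hzero := hΨp.integral_deriv_eq_zero hΨ ((by fun_prop : Continuous _).intervalIntegrable 0 1)
  rw [intervalIntegral.integral_add ((by fun_prop : Continuous _).intervalIntegrable 0 1)
      ((by fun_prop : Continuous fun x => (lam - 2) * u' x ^ 3).intervalIntegrable 0 1),
    intervalIntegral.integral_const_mul] at hzero
  linarith

/-- The μ-λ equation `m_t + u m_θ + λ u_θ m = 0` with momentum `m = σ - u_θθ`, for times in `S`;
the partial derivatives of `u` are given as separate functions. -/
structure IsMuLambdaSolution (S : Set ℝ) (lam σ : ℝ) (u uθ uθθ uθθθ utθ utθθ : ℝ → ℝ → ℝ) :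
    Prop where
  periodic : ∀ t ∈ S, Periodic (u t) 1
  hasDerivAt_u : ∀ t ∈ S, ∀ θ, HasDerivAt (u t) (uθ t θ) θ
  hasDerivAt_uθ : ∀ t ∈ S, ∀ θ, HasDerivAt (uθ t) (uθθ t θ) θ
  hasDerivAt_uθθ : ∀ t ∈ S, ∀ θ, HasDerivAt (uθθ t) (uθθθ t θ) θ
  hasDerivWithinAt_uθ : ∀ θ, ∀ t ∈ S, HasDerivWithinAt (uθ · θ) (utθ t θ) S t
  hasDerivWithinAt_uθθ : ∀ θ, ∀ t ∈ S, HasDerivWithinAt (uθθ · θ) (utθθ t θ) S t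
  continuousOn_utθ : ContinuousOn (uncurry utθ) (S ×ˢ univ)
  continuousOn_utθθ : ContinuousOn (uncurry utθθ) (S ×ˢ univ)
  equation : ∀ t ∈ S, ∀ θ, -utθθ t θ + u t θ * -uθθθ t θ + lam * uθ t θ * (σ - uθθ t θ) = 0

namespace IsMuLambdaSolution

variable {S K : Set ℝ} {lam σ a b t : ℝ} {u uθ uθθ uθθθ utθ utθθ : ℝ → ℝ → ℝ}

theorem mono (h : IsMuLambdaSolution S lam σ u uθ uθθ uθθθ utθ utθθ) (hKS : K ⊆ S) :
    IsMuLambdaSolution K lam σ u uθ uθθ uθθθ utθ utθθ where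
  periodic t ht := h.periodic t (hKS ht)
  hasDerivAt_u t ht := h.hasDerivAt_u t (hKS ht)
  hasDerivAt_uθ t ht := h.hasDerivAt_uθ t (hKS ht)
  hasDerivAt_uθθ t ht := h.hasDerivAt_uθθ t (hKS ht)
  hasDerivWithinAt_uθ θ t ht := (h.hasDerivWithinAt_uθ θ t (hKS ht)).mono hKS
  hasDerivWithinAt_uθθ θ t ht := (h.hasDerivWithinAt_uθθ θ t (hKS ht)).mono hKS
  continuousOn_utθ := h.continuousOn_utθ.mono (prod_mono hKS subset_rfl)
  continuousOn_utθθ := h.continuousOn_utθθ.mono (prod_mono hKS subset_rfl)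
  equation t ht := h.equation t (hKS ht)

theorem continuous_uθ (h : IsMuLambdaSolution S lam σ u uθ uθθ uθθθ utθ utθθ) (ht : t ∈ S) :
    Continuous (uθ t) :=
  continuous_iff_continuousAt.2 fun θ => (h.hasDerivAt_uθ t ht θ).continuousAt

theorem continuous_uθθ (h : IsMuLambdaSolution S lam σ u uθ uθθ uθθθ utθ utθθ) (ht : t ∈ S) :
    Continuous (uθθ t) :=
  continuous_iff_continuousAt.2 fun θ => (h.hasDerivAt_uθθ t ht θ).continuousAt

theorem hasDerivAt_utθ (h : IsMuLambdaSolution (Icc a b) lam σ u uθ uθθ uθθθ utθ utθθ)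
    (hab : a < b) (ht : t ∈ Icc a b) (θ : ℝ) : HasDerivAt (utθ t) (utθθ t θ) θ :=
  hasDerivAt_of_mixed_partials_Icc hab h.hasDerivAt_uθ (fun _ hs => h.continuous_uθθ hs)
    h.hasDerivWithinAt_uθ h.hasDerivWithinAt_uθθ h.continuousOn_utθθ ht θ

theorem periodic_utθ (h : IsMuLambdaSolution (Icc a b) lam σ u uθ uθθ uθθθ utθ utθθ)
    (hab : a < b) (ht : t ∈ Icc a b) : Periodic (utθ t) 1 :=
  periodic_of_hasDerivWithinAt
    (fun s hs => (h.periodic s hs).periodic_of_hasDerivAt (h.hasDerivAt_u s hs))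
    (fun θ => h.hasDerivWithinAt_uθ θ t ht) (uniqueDiffOn_Icc hab t ht) ht

theorem hasDerivWithinAt_energy (h : IsMuLambdaSolution (Icc a b) lam σ u uθ uθθ uθθθ utθ utθθ)
    (hab : a < b) (ht : t ∈ Icc a b) :
    HasDerivWithinAt (fun s => ∫ θ in 0..1, uθ s θ ^ 2) (-(lam - 2) * ∫ θ in 0..1, uθ t θ ^ 3)
      (Icc a b) t := by
  have huθ : ContinuousOn (uncurry uθ) (Icc a b ×ˢ univ) :=
    continuousOn_uncurry_of_hasDerivWithinAt_Icc hab.le h.hasDerivWithinAt_uθ h.continuousOn_utθ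
      (h.continuous_uθ (left_mem_Icc.2 hab.le))
  have hE := hasDerivWithinAt_intervalIntegral_Icc (F := fun s θ => uθ s θ ^ 2)
    (F' := fun s θ => 2 * uθ s θ * utθ s θ)
    (fun θ s hs => ((h.hasDerivWithinAt_uθ θ s hs).pow 2).congr_deriv (by push_cast; ring))
    (((continuousOn_const (c := (2 : ℝ))).mul huθ).mul h.continuousOn_utθ)
    (fun s hs => ((h.continuous_uθ hs).pow 2).intervalIntegrable 0 1) ht
  rwa [integral_deriv_mul_eq_of_muLambda (h.periodic t ht) (h.periodic_utθ hab ht)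
    (h.hasDerivAt_u t ht) (h.hasDerivAt_uθ t ht) (h.hasDerivAt_uθθ t ht) (h.hasDerivAt_utθ hab ht)
    (h.equation t ht)] at hE

end IsMuLambdaSolution

theorem exists_Icc_subset_mem_nhdsWithin {T : EReal} {J : Set ℝ}
    (hJ : J = {t : ℝ | 0 ≤ t ∧ (t : EReal) < T}) {t : ℝ} (ht : t ∈ J) :
    ∃ b, 0 < b ∧ t ∈ Icc 0 b ∧ Icc 0 b ⊆ J ∧ Icc 0 b ∈ 𝓝[J] t := by
  subst hJ
  obtain ⟨b, htb, hbT⟩ := EReal.lt_iff_exists_real_btwn.1 ht.2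
  have htb : t < b := EReal.coe_lt_coe_iff.1 htb
  exact ⟨b, ht.1.trans_lt htb, ⟨ht.1, htb.le⟩,
    fun s hs => ⟨hs.1, (EReal.coe_le_coe_iff.2 hs.2).trans_lt hbT⟩,
    mem_nhdsWithin.2 ⟨Iio b, isOpen_Iio, htb, fun s hs => ⟨hs.2.1, hs.1.le⟩⟩⟩

theorem stmt_4_general (lam : ℝ) (T : EReal)
    (J : Set ℝ) (hJ : J = {t : ℝ | 0 ≤ t ∧ (t : EReal) < T})
    (u uθ utθ uθθ utθθ uθθθ : ℝ → ℝ → ℝ) (σ : ℝ)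
    (huper : ∀ t ∈ J, ∀ θ : ℝ, u t (θ + 1) = u t θ)
    -- u is C³ in θ
    (huθ : ∀ t ∈ J, ∀ θ : ℝ, HasDerivAt (u t) (uθ t θ) θ)
    (huθθ : ∀ t ∈ J, ∀ θ : ℝ, HasDerivAt (uθ t) (uθθ t θ) θ)
    (huθθθ : ∀ t ∈ J, ∀ θ : ℝ, HasDerivAt (uθθ t) (uθθθ t θ) θ)
    -- u is C¹ in t, with continuous mixed partials u_t, u_tθ, u_tθθ
    (hutθ : ∀ θ : ℝ, ∀ t ∈ J, HasDerivWithinAt (fun s => uθ s θ) (utθ t θ) J t)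
    (hutθθ : ∀ θ : ℝ, ∀ t ∈ J, HasDerivWithinAt (fun s => uθθ s θ) (utθθ t θ) J t)
    (hutθc : ContinuousOn (fun p : ℝ × ℝ => utθ p.1 p.2) (J ×ˢ univ))
    (hutθθc : ContinuousOn (fun p : ℝ × ℝ => utθθ p.1 p.2) (J ×ˢ univ))
    -- the μ-λ equation m_t + u m_θ + λ u_θ m = 0 with m = σ - u_θθ
    (hPDE : ∀ t ∈ J, ∀ θ : ℝ,
      -(utθθ t θ) + u t θ * (-(uθθθ t θ)) + lam * uθ t θ * (σ - uθθ t θ) = 0) :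
    (∀ t ∈ J, HasDerivWithinAt (fun s => ∫ φ in (0:ℝ)..1, uθ s φ ^ 2)
        (-(lam - 2) * ∫ φ in (0:ℝ)..1, uθ t φ ^ 3) J t) ∧
    (lam = 2 → ∀ t ∈ J,
      (∫ φ in (0:ℝ)..1, uθ t φ ^ 2) = ∫ φ in (0:ℝ)..1, uθ 0 φ ^ 2) ∧
    ((lam = 2 ∨ lam = 3) → ∀ t ∈ J,
      (lam - 3) / 2 * (∫ φ in (0:ℝ)..1, uθ t φ ^ 2) - lam * σ ^ 2
        = (lam - 3) / 2 * (∫ φ in (0:ℝ)..1, uθ 0 φ ^ 2) - lam * σ ^ 2) ∧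
    (lam = 3 → ∀ t ∈ J,
      (lam - 3) / 2 * (∫ φ in (0:ℝ)..1, uθ t φ ^ 2) - lam * σ ^ 2 = -3 * σ ^ 2) := by
  have hsol : IsMuLambdaSolution J lam σ u uθ uθθ uθθθ utθ utθθ :=
    ⟨huper, huθ, huθθ, huθθθ, hutθ, hutθθ, hutθc, hutθθc, hPDE⟩
  have hderiv : ∀ t ∈ J, HasDerivWithinAt (fun s => ∫ φ in (0:ℝ)..1, uθ s φ ^ 2)
      (-(lam - 2) * ∫ φ in (0:ℝ)..1, uθ t φ ^ 3) J t := fun t ht => by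
    obtain ⟨b, hb, htK, hKJ, hK⟩ := exists_Icc_subset_mem_nhdsWithin hJ ht
    exact ((hsol.mono hKJ).hasDerivWithinAt_energy hb htK).mono_of_mem_nhdsWithin hK
  have hconst : lam = 2 → ∀ t ∈ J,
      (∫ φ in (0:ℝ)..1, uθ t φ ^ 2) = ∫ φ in (0:ℝ)..1, uθ 0 φ ^ 2 := by
    rintro rfl t ht
    obtain ⟨b, hb, htK, hKJ, -⟩ := exists_Icc_subset_mem_nhdsWithin hJ ht
    simpa [sub_eq_zero] using (convex_Icc 0 b).norm_image_sub_le_of_norm_hasDerivWithin_le (C := 0)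
      (fun s hs => (hderiv s (hKJ hs)).mono hKJ) (fun _ _ => by simp) ⟨le_rfl, hb.le⟩ htK
  refine ⟨hderiv, hconst, ?_, ?_⟩
  · rintro (h | rfl) t ht
    · rw [hconst h t ht]
    · ring
  · rintro rfl t ht
    ring

/-- the kinetic energy E(t) = ∫₀¹ u_θ² satisfies
E'(t) = -(λ-2) ∫₀¹ u_θ³ for solutions of the μ-λ equation; in particular E is
constant for λ = 2, and I(t) = ((λ-3)/2)E(t) - λσ² is constant for λ ∈ {2,3}
(equal to -3σ² when λ = 3). -/
theorem stmt_4 (lam : ℝ) (T : EReal) (hT : 0 < T)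
    (J : Set ℝ) (hJ : J = {t : ℝ | 0 ≤ t ∧ (t : EReal) < T})
    (u ut uθ utθ uθθ utθθ uθθθ : ℝ → ℝ → ℝ) (σ : ℝ)
    (huper : ∀ t ∈ J, ∀ θ : ℝ, u t (θ + 1) = u t θ)
    -- u is C³ in θ
    (huθ : ∀ t ∈ J, ∀ θ : ℝ, HasDerivAt (u t) (uθ t θ) θ)
    (huθθ : ∀ t ∈ J, ∀ θ : ℝ, HasDerivAt (uθ t) (uθθ t θ) θ)
    (huθθθ : ∀ t ∈ J, ∀ θ : ℝ, HasDerivAt (uθθ t) (uθθθ t θ) θ)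
    (huθθθc : ∀ t ∈ J, Continuous (uθθθ t))
    -- u is C¹ in t, with continuous mixed partials u_t, u_tθ, u_tθθ
    (hut : ∀ θ : ℝ, ∀ t ∈ J, HasDerivWithinAt (fun s => u s θ) (ut t θ) J t)
    (hutθ : ∀ θ : ℝ, ∀ t ∈ J, HasDerivWithinAt (fun s => uθ s θ) (utθ t θ) J t)
    (hutθθ : ∀ θ : ℝ, ∀ t ∈ J, HasDerivWithinAt (fun s => uθθ s θ) (utθθ t θ) J t)
    (hutc : ContinuousOn (fun p : ℝ × ℝ => ut p.1 p.2) (J ×ˢ univ))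
    (hutθc : ContinuousOn (fun p : ℝ × ℝ => utθ p.1 p.2) (J ×ˢ univ))
    (hutθθc : ContinuousOn (fun p : ℝ × ℝ => utθθ p.1 p.2) (J ×ˢ univ))
    -- σ = ∫₀¹ u(t,θ) dθ, constant in t
    (hσ : ∀ t ∈ J, (∫ φ in (0:ℝ)..1, u t φ) = σ)
    -- the μ-λ equation m_t + u m_θ + λ u_θ m = 0 with m = σ - u_θθ
    (hPDE : ∀ t ∈ J, ∀ θ : ℝ,
      -(utθθ t θ) + u t θ * (-(uθθθ t θ)) + lam * uθ t θ * (σ - uθθ t θ) = 0) :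
    (∀ t ∈ J, HasDerivWithinAt (fun s => ∫ φ in (0:ℝ)..1, uθ s φ ^ 2)
        (-(lam - 2) * ∫ φ in (0:ℝ)..1, uθ t φ ^ 3) J t) ∧
    (lam = 2 → ∀ t ∈ J,
      (∫ φ in (0:ℝ)..1, uθ t φ ^ 2) = ∫ φ in (0:ℝ)..1, uθ 0 φ ^ 2) ∧
    ((lam = 2 ∨ lam = 3) → ∀ t ∈ J,
      (lam - 3) / 2 * (∫ φ in (0:ℝ)..1, uθ t φ ^ 2) - lam * σ ^ 2
        = (lam - 3) / 2 * (∫ φ in (0:ℝ)..1, uθ 0 φ ^ 2) - lam * σ ^ 2) ∧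
    (lam = 3 → ∀ t ∈ J,
      (lam - 3) / 2 * (∫ φ in (0:ℝ)..1, uθ t φ ^ 2) - lam * σ ^ 2 = -3 * σ ^ 2) :=
  stmt_4_general lam T J hJ u uθ utθ uθθ utθθ uθθθ σ huper huθ huθθ huθθθ hutθ hutθθ hutθc hutθθc
    hPDE
end

section
/- Let λ ≠ 1, γ = 2/(λ−1), σ ∈ ℝ, u₀ ∈ C²(ℝ) 1-periodic, and T ∈ (0,∞]. Let η : [0,T) × ℝ → ℝ be C³ with η(t,θ+1) = η(t,θ)+1, η_θ(t,θ) > 0, η(0,θ) = θ, η_t(0,θ) = u₀(θ), satisfying η_ttθ = −((λ−3)/2) η_tθ²/η_θ + [λσ(η_t − σ) + ((λ−3)/2) E(t)] η_θ, where E(t) = ∫₀¹ η_tθ(t,φ)²/η_θ(t,φ) dφ. Define x(t,θ) = η_θ(t,θ)^{1/γ}, y(t,θ) = −γ x_θ(t,θ) + σ x(t,θ) ∫₀ᵗ x(τ,θ)^γ dτ, and F(t,θ) = (λ(λ−1)σ/2)(η_t(t,θ) − σ) + ((λ−1)(λ−3)/4) E(t). Then x_tt(t,θ) = F(t,θ)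 x(t,θ) and y_tt(t,θ) = F(t,θ) y(t,θ) for all (t,θ); moreover E(t) = γ² ∫₀¹ x(t,φ)^{γ−2} x_t(t,φ)² dφ, and the initial values are x(0,θ) = 1, x_t(0,θ) = u₀'(θ)/γ, y(0,θ) = 0, y_t(0,θ) = σ − u₀''(θ). -/
/-!
Along each particle path the equation is a second-order ODE in `t` for `w = η_θ`. The power
`x = w ^ (1/γ)`, with `1/γ = (λ - 1)/2`, removes the `w_t² / w` term and leaves `x_tt = F x`.
Differentiating this in `θ` gives `(x_θ)_tt = F x_θ + F_θ x` with `F_θ = λ(λ - 1)σ/2 · η_tθ`, and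
the extra term `σ x ∫₀ᵗ x^γ` in `y` (note `x^γ = η_θ`) exactly absorbs `F_θ x`, so `y_tt = F y`.
The time derivative of `η_tθθ` is not among the data, so the `θ`-derivative of `x_tt = F x` is
taken under the integral in `x_t(t) = x_t(0) + ∫₀ᵗ F x`.
-/

open Set MeasureTheory Filter Topology Function

section IntervalCalculus

variable {E : Type*} [NormedAddCommGroup E] [NormedSpace ℝ E] {a b : ℝ}

theorem hasDerivWithinAt_integral_Icc [CompleteSpace E] {f : ℝ → E}
    (hf : ContinuousOn f (Icc a b)) {t : ℝ} (ht : t ∈ Icc a b) :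
    HasDerivWithinAt (fun u => ∫ s in a..u, f s) (f t) (Icc a b) t := by
  have : Fact (t ∈ Icc a b) := ⟨ht⟩
  exact intervalIntegral.integral_hasDerivWithinAt_right
    ((hf.mono (Icc_subset_Icc_right ht.2)).intervalIntegrable_of_Icc ht.1)
    (hf.stronglyMeasurableAtFilter_nhdsWithin measurableSet_Icc t) (hf t ht)

theorem integral_eq_sub_of_hasDerivWithinAt_Icc [CompleteSpace E] {f f' : ℝ → E} (hab : a ≤ b)
    (hf : ∀ t ∈ Icc a b, HasDerivWithinAt f (f' t) (Icc a b) t)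
    (hf' : ContinuousOn f' (Icc a b)) :
    ∫ s in a..b, f' s = f b - f a :=
  intervalIntegral.integral_eq_sub_of_hasDerivAt_of_le hab
    (fun t ht => (hf t ht).continuousWithinAt)
    (fun t ht => (hf t (Ioo_subset_Icc_self ht)).hasDerivAt (Icc_mem_nhds ht.1 ht.2))
    (hf'.intervalIntegrable_of_Icc hab)

theorem hasDerivAt_integral_of_continuousOn_deriv {h k : ℝ → ℝ → E} (hab : a ≤ b)
    (hh : ∀ θ, ContinuousOn (h · θ) (Icc a b))
    (hhk : ∀ s ∈ Icc a b, ∀ θ, HasDerivAt (h s) (k s θ) θ)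
    (hk : ContinuousOn (uncurry k) (Icc a b ×ˢ univ)) (θ : ℝ) :
    HasDerivAt (fun θ => ∫ s in a..b, h s θ) (∫ s in a..b, k s θ) θ := by
  obtain ⟨C, hC⟩ : ∃ C, ∀ p ∈ Icc a b ×ˢ Metric.closedBall θ 1, ‖uncurry k p‖ ≤ C :=
    (isCompact_Icc.prod (isCompact_closedBall θ 1)).exists_bound_of_continuousOn
      (hk.mono (prod_mono_right (subset_univ _)))
  have hIoc : uIoc a b ⊆ Icc a b := by rw [uIoc_of_le hab]; exact Ioc_subset_Icc_self
  refine (intervalIntegral.hasDerivAt_integral_of_dominated_loc_of_deriv_le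
    (F := fun θ s => h s θ) (F' := fun θ s => k s θ) (bound := fun _ => C)
    (Metric.ball_mem_nhds θ one_pos) ?_ ((hh θ).intervalIntegrable_of_Icc hab)
    (((hk.uncurry_right θ (mem_univ θ)).mono hIoc).aestronglyMeasurable measurableSet_uIoc) ?_
    intervalIntegrable_const ?_).2
  · exact Eventually.of_forall fun θ' =>
      ((hh θ').mono hIoc).aestronglyMeasurable measurableSet_uIoc
  · exact ae_of_all _ fun s hs θ' hθ' => hC (s, θ') ⟨hIoc hs, Metric.ball_subset_closedBall hθ'⟩
  · exact ae_of_all _ fun s hs θ' _ => hhk s (hIoc hs) θ'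

/-- Differentiate `f t - f a = ∫ₐᵗ ∂_t f` in `θ` under the integral sign, then in `t`. -/
theorem hasDerivWithinAt_Icc_of_mixed_partials [CompleteSpace E] {f g h k : ℝ → ℝ → E}
    (hfg : ∀ t ∈ Icc a b, ∀ θ, HasDerivAt (f t) (g t θ) θ)
    (hfh : ∀ t ∈ Icc a b, ∀ θ, HasDerivWithinAt (f · θ) (h t θ) (Icc a b) t)
    (hh : ∀ θ, ContinuousOn (h · θ) (Icc a b))
    (hhk : ∀ t ∈ Icc a b, ∀ θ, HasDerivAt (h t) (k t θ) θ)
    (hk : ContinuousOn (uncurry k) (Icc a b ×ˢ univ)) {t : ℝ} (ht : t ∈ Icc a b) (θ : ℝ) :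
    HasDerivWithinAt (g · θ) (k t θ) (Icc a b) t := by
  have hg : ∀ t ∈ Icc a b, g t θ = g a θ + ∫ s in a..t, k s θ := by
    intro t ht
    have hsub : Icc a t ⊆ Icc a b := Icc_subset_Icc_right ht.2
    have hFTC : (fun θ => ∫ s in a..t, h s θ) = fun θ => f t θ - f a θ :=
      funext fun θ => integral_eq_sub_of_hasDerivWithinAt_Icc ht.1
        (fun s hs => (hfh s (hsub hs) θ).mono hsub) ((hh θ).mono hsub)
    have hderiv := hasDerivAt_integral_of_continuousOn_deriv ht.1 (fun θ => (hh θ).mono hsub)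
      (fun s hs => hhk s (hsub hs)) (hk.mono (prod_mono_left hsub)) θ
    rw [hFTC] at hderiv
    rw [hderiv.unique ((hfg t ht θ).sub (hfg a (left_mem_Icc.2 (ht.1.trans ht.2)) θ))]
    abel
  exact ((hasDerivWithinAt_integral_Icc (hk.uncurry_right θ (mem_univ θ)) ht).const_add
    (g a θ)).congr hg (hg t ht)

end IntervalCalculus

section TimeInterval

abbrev timeInterval (T : EReal) : Set ℝ := {t : ℝ | 0 ≤ t ∧ (t : EReal) < T}

variable {E : Type*} [NormedAddCommGroup E] [NormedSpace ℝ E] [CompleteSpace E]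
  {T : EReal} {t : ℝ}

theorem Icc_zero_subset_timeInterval (ht : t ∈ timeInterval T) : Icc 0 t ⊆ timeInterval T :=
  fun _ hs => ⟨hs.1, (EReal.coe_le_coe_iff.mpr hs.2).trans_lt ht.2⟩

theorem exists_Icc_subset_timeInterval (ht : t ∈ timeInterval T) :
    ∃ b, t ∈ Icc 0 b ∧ Icc 0 b ⊆ timeInterval T ∧ Icc 0 b ∈ 𝓝[timeInterval T] t := by
  obtain ⟨b, htb, hbT⟩ := EReal.lt_iff_exists_real_btwn.mp ht.2
  have htb : t < b := EReal.coe_lt_coe_iff.mp htb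
  refine ⟨b, ⟨ht.1, htb.le⟩, Icc_zero_subset_timeInterval ⟨ht.1.trans htb.le, hbT⟩, ?_⟩
  exact mem_nhdsWithin.mpr ⟨Iio b, isOpen_Iio, htb, fun _ hs => ⟨hs.2.1, hs.1.le⟩⟩

theorem hasDerivWithinAt_integral_timeInterval {f : ℝ → E}
    (hf : ContinuousOn f (timeInterval T)) (ht : t ∈ timeInterval T) :
    HasDerivWithinAt (fun u => ∫ s in (0:ℝ)..u, f s) (f t) (timeInterval T) t := by
  obtain ⟨b, htb, hsub, hnhds⟩ := exists_Icc_subset_timeInterval ht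
  exact (hasDerivWithinAt_integral_Icc (hf.mono hsub) htb).mono_of_mem_nhdsWithin hnhds

theorem hasDerivWithinAt_timeInterval_of_mixed_partials {f g h k : ℝ → ℝ → E}
    (hfg : ∀ t ∈ timeInterval T, ∀ θ, HasDerivAt (f t) (g t θ) θ)
    (hfh : ∀ t ∈ timeInterval T, ∀ θ, HasDerivWithinAt (f · θ) (h t θ) (timeInterval T) t)
    (hh : ∀ θ, ContinuousOn (h · θ) (timeInterval T))
    (hhk : ∀ t ∈ timeInterval T, ∀ θ, HasDerivAt (h t) (k t θ) θ)
    (hk : ContinuousOn (uncurry k) (timeInterval T ×ˢ univ)) (ht : t ∈ timeInterval T)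
    (θ : ℝ) : HasDerivWithinAt (g · θ) (k t θ) (timeInterval T) t := by
  obtain ⟨b, htb, hsub, hnhds⟩ := exists_Icc_subset_timeInterval ht
  exact (hasDerivWithinAt_Icc_of_mixed_partials (fun s hs => hfg s (hsub hs))
    (fun s hs θ => (hfh s (hsub hs) θ).mono hsub) (fun θ => (hh θ).mono hsub)
    (fun s hs => hhk s (hsub hs)) (hk.mono (prod_mono_left hsub)) htb θ).mono_of_mem_nhdsWithin
    hnhds

end TimeInterval

theorem HasDerivWithinAt.const_mul_rpow_sub_one_mul {w v : ℝ → ℝ} {w' v' c p t : ℝ} {s : Set ℝ}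
    (hw : HasDerivWithinAt w w' s t) (hv : HasDerivWithinAt v v' s t) (hw0 : w t ≠ 0) :
    HasDerivWithinAt (fun u => c * w u ^ (p - 1) * v u)
      (c * ((p - 1) * w t ^ (p - 2) * w' * v t + w t ^ (p - 1) * v')) s t := by
  refine (((hw.rpow_const (p := p - 1) (Or.inl hw0)).const_mul c).mul hv).congr_deriv ?_
  rw [show p - 1 - 1 = p - 2 by ring]
  ring

/-- The left side is `(w ^ p)''` when `w'' = -(p - 1) w'² / w + c w`: the exponent `p` is what
cancels the `w'²` terms. -/
theorem second_deriv_rpow_of_ode (p c w w' : ℝ) (hw : 0 < w) :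
    p * ((p - 1) * w ^ (p - 2) * w' * w' + w ^ (p - 1) * (-(p - 1) * w' ^ 2 / w + c * w))
      = p * c * w ^ p := by
  rw [show p - 2 = p - 1 - 1 by ring, Real.rpow_sub_one hw.ne' (p - 1),
    Real.rpow_sub_one hw.ne' p]
  field_simp
  ring

theorem one_div_eq_of_mul_sub_one_eq_two {γ lam : ℝ} (hγ : γ * (lam - 1) = 2) :
    1 / γ = (lam - 1) / 2 := by
  rw [div_eq_div_iff (left_ne_zero_of_mul (by rw [hγ]; norm_num)) two_ne_zero]
  linarith

theorem sq_div_eq_mul_rpow {γ w v : ℝ} (hγ : γ ≠ 0) (hw : 0 < w) :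
    v ^ 2 / w = γ ^ 2 * ((w ^ (1 / γ)) ^ (γ - 2) * (1 / γ * w ^ (1 / γ - 1) * v) ^ 2) := by
  have hpow : (w ^ (1 / γ)) ^ (γ - 2) * (w ^ (1 / γ - 1)) ^ 2 = w⁻¹ := by
    rw [← Real.rpow_mul hw.le, ← Real.rpow_mul_natCast hw.le, ← Real.rpow_add hw,
      ← Real.rpow_neg_one]
    congr 1
    field_simp
    ring
  rw [show γ ^ 2 * ((w ^ (1 / γ)) ^ (γ - 2) * (1 / γ * w ^ (1 / γ - 1) * v) ^ 2)
      = (γ * (1 / γ)) ^ 2 * ((w ^ (1 / γ)) ^ (γ - 2) * (w ^ (1 / γ - 1)) ^ 2) * v ^ 2 by ring,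
    hpow, mul_one_div_cancel hγ]
  field_simp

noncomputable section

namespace SolarTransform

variable (lam γ σ : ℝ) (ηt ηθ ηtθ ηθθ ηtθθ : ℝ → ℝ → ℝ)

def energy (t : ℝ) : ℝ := ∫ φ in (0:ℝ)..1, ηtθ t φ ^ 2 / ηθ t φ

def F (t θ : ℝ) : ℝ :=
  lam * (lam - 1) * σ / 2 * (ηt t θ - σ) + (lam - 1) * (lam - 3) / 4 * energy ηθ ηtθ t

def x (t θ : ℝ) : ℝ := ηθ t θ ^ (1 / γ)

def xt (t θ : ℝ) : ℝ := 1 / γ * ηθ t θ ^ (1 / γ - 1) * ηtθ t θ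

def xθ (t θ : ℝ) : ℝ := 1 / γ * ηθ t θ ^ (1 / γ - 1) * ηθθ t θ

def xtθ (t θ : ℝ) : ℝ :=
  1 / γ * ((1 / γ - 1) * ηθ t θ ^ (1 / γ - 2) * ηθθ t θ * ηtθ t θ
    + ηθ t θ ^ (1 / γ - 1) * ηtθθ t θ)

def xttθ (t θ : ℝ) : ℝ :=
  lam * (lam - 1) * σ / 2 * ηtθ t θ * x γ ηθ t θ + F lam σ ηt ηθ ηtθ t θ * xθ γ ηθ ηθθ t θ

def G (t θ : ℝ) : ℝ := ∫ τ in (0:ℝ)..t, ηθ τ θ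

def y (t θ : ℝ) : ℝ := -γ * xθ γ ηθ ηθθ t θ + σ * x γ ηθ t θ * G ηθ t θ

def yt (t θ : ℝ) : ℝ :=
  -γ * xtθ γ ηθ ηtθ ηθθ ηtθθ t θ
    + σ * (xt γ ηθ ηtθ t θ * G ηθ t θ + x γ ηθ t θ * ηθ t θ)

variable {lam γ σ ηt ηθ ηtθ ηθθ ηtθθ} {ηttθ : ℝ → ℝ → ℝ} {J : Set ℝ} {t θ : ℝ}

theorem hasDerivWithinAt_x (hpos : 0 < ηθ t θ)
    (hηθt : HasDerivWithinAt (ηθ · θ) (ηtθ t θ) J t) :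
    HasDerivWithinAt (x γ ηθ · θ) (xt γ ηθ ηtθ t θ) J t :=
  (hηθt.rpow_const (Or.inl hpos.ne')).congr_deriv (by simp only [xt]; ring)

theorem hasDerivAt_x (hpos : 0 < ηθ t θ) (hηθθ : HasDerivAt (ηθ t) (ηθθ t θ) θ) :
    HasDerivAt (x γ ηθ t) (xθ γ ηθ ηθθ t θ) θ :=
  (hηθθ.rpow_const (Or.inl hpos.ne')).congr_deriv (by simp only [xθ]; ring)

theorem hasDerivWithinAt_xθ (hpos : 0 < ηθ t θ)
    (hηθt : HasDerivWithinAt (ηθ · θ) (ηtθ t θ) J t)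
    (hηθθt : HasDerivWithinAt (ηθθ · θ) (ηtθθ t θ) J t) :
    HasDerivWithinAt (xθ γ ηθ ηθθ · θ) (xtθ γ ηθ ηtθ ηθθ ηtθθ t θ) J t :=
  (hηθt.const_mul_rpow_sub_one_mul hηθθt hpos.ne').congr_deriv (by simp only [xtθ]; ring)

theorem hasDerivAt_xt (hpos : 0 < ηθ t θ) (hηθθ : HasDerivAt (ηθ t) (ηθθ t θ) θ)
    (hηtθθ : HasDerivAt (ηtθ t) (ηtθθ t θ) θ) :
    HasDerivAt (xt γ ηθ ηtθ t) (xtθ γ ηθ ηtθ ηθθ ηtθθ t θ) θ :=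
  hasDerivWithinAt_univ.mp <|
    hηθθ.hasDerivWithinAt.const_mul_rpow_sub_one_mul hηtθθ.hasDerivWithinAt hpos.ne'

theorem hasDerivWithinAt_xt (hγ : γ * (lam - 1) = 2) (hpos : 0 < ηθ t θ)
    (hηθt : HasDerivWithinAt (ηθ · θ) (ηtθ t θ) J t)
    (hηttθ : HasDerivWithinAt (ηtθ · θ) (ηttθ t θ) J t)
    (hPDE : ηttθ t θ = -((lam - 3) / 2) * ηtθ t θ ^ 2 / ηθ t θ
      + (lam * σ * (ηt t θ - σ) + (lam - 3) / 2 * energy ηθ ηtθ t) * ηθ t θ) :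
    HasDerivWithinAt (xt γ ηθ ηtθ · θ) (F lam σ ηt ηθ ηtθ t θ * x γ ηθ t θ) J t := by
  refine (hηθt.const_mul_rpow_sub_one_mul hηttθ hpos.ne').congr_deriv ?_
  have hp := one_div_eq_of_mul_sub_one_eq_two hγ
  rw [hPDE, show (lam - 3) / 2 = 1 / γ - 1 by rw [hp]; ring,
    second_deriv_rpow_of_ode _ _ _ _ hpos]
  simp only [F, x, hp]
  ring

theorem hasDerivAt_F_mul_x (hpos : 0 < ηθ t θ) (hηtθ : HasDerivAt (ηt t) (ηtθ t θ) θ)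
    (hηθθ : HasDerivAt (ηθ t) (ηθθ t θ) θ) :
    HasDerivAt (fun θ => F lam σ ηt ηθ ηtθ t θ * x γ ηθ t θ)
      (xttθ lam γ σ ηt ηθ ηtθ ηθθ t θ) θ :=
  ((((hηtθ.sub_const σ).const_mul _).add_const _).mul (hasDerivAt_x hpos hηθθ)).congr_deriv
    (by simp only [xttθ, F])

theorem continuousOn_x (hpos : ∀ t ∈ J, ∀ θ, 0 < ηθ t θ)
    (hηθc : ContinuousOn (uncurry ηθ) (J ×ˢ univ)) :
    ContinuousOn (uncurry (x γ ηθ)) (J ×ˢ univ) :=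
  hηθc.rpow_const fun q hq => Or.inl (hpos q.1 hq.1 q.2).ne'

theorem continuousOn_xθ (hpos : ∀ t ∈ J, ∀ θ, 0 < ηθ t θ)
    (hηθc : ContinuousOn (uncurry ηθ) (J ×ˢ univ))
    (hηθθc : ContinuousOn (uncurry ηθθ) (J ×ˢ univ)) :
    ContinuousOn (uncurry (xθ γ ηθ ηθθ)) (J ×ˢ univ) :=
  (continuousOn_const.mul (hηθc.rpow_const fun q hq => Or.inl (hpos q.1 hq.1 q.2).ne')).mul
    hηθθc

/-- `F` involves `η_t`, whose continuity is not assumed; the equation expresses `F` through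
`η_ttθ`, `η_tθ` and `η_θ` instead. -/
theorem continuousOn_F (hpos : ∀ t ∈ J, ∀ θ, 0 < ηθ t θ)
    (hηθc : ContinuousOn (uncurry ηθ) (J ×ˢ univ))
    (hηtθc : ContinuousOn (uncurry ηtθ) (J ×ˢ univ))
    (hηttθc : ContinuousOn (uncurry ηttθ) (J ×ˢ univ))
    (hPDE : ∀ t ∈ J, ∀ θ, ηttθ t θ = -((lam - 3) / 2) * ηtθ t θ ^ 2 / ηθ t θ
      + (lam * σ * (ηt t θ - σ) + (lam - 3) / 2 * energy ηθ ηtθ t) * ηθ t θ) :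
    ContinuousOn (uncurry (F lam σ ηt ηθ ηtθ)) (J ×ˢ univ) := by
  have hne : ∀ q ∈ J ×ˢ (univ : Set ℝ), ηθ q.1 q.2 ≠ 0 := fun q hq => (hpos q.1 hq.1 q.2).ne'
  refine ContinuousOn.congr (f := fun q => (lam - 1) / 2
    * ((ηttθ q.1 q.2 + (lam - 3) / 2 * ηtθ q.1 q.2 ^ 2 / ηθ q.1 q.2) / ηθ q.1 q.2)) ?_ ?_
  · exact continuousOn_const.mul
      ((hηttθc.add ((continuousOn_const.mul (hηtθc.pow 2)).div hηθc hne)).div hηθc hne)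
  · intro q hq
    have := hne q hq
    simp only [uncurry, F, hPDE q.1 hq.1 q.2]
    field_simp
    ring

theorem continuousOn_xttθ (hpos : ∀ t ∈ J, ∀ θ, 0 < ηθ t θ)
    (hηθc : ContinuousOn (uncurry ηθ) (J ×ˢ univ))
    (hηtθc : ContinuousOn (uncurry ηtθ) (J ×ˢ univ))
    (hηθθc : ContinuousOn (uncurry ηθθ) (J ×ˢ univ))
    (hF : ContinuousOn (uncurry (F lam σ ηt ηθ ηtθ)) (J ×ˢ univ)) :
    ContinuousOn (uncurry (xttθ lam γ σ ηt ηθ ηtθ ηθθ)) (J ×ˢ univ) :=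
  ((continuousOn_const.mul hηtθc).mul (continuousOn_x hpos hηθc)).add
    (hF.mul (continuousOn_xθ hpos hηθc hηθθc))

theorem hasDerivWithinAt_y (hpos : 0 < ηθ t θ)
    (hηθt : HasDerivWithinAt (ηθ · θ) (ηtθ t θ) J t)
    (hηθθt : HasDerivWithinAt (ηθθ · θ) (ηtθθ t θ) J t)
    (hG : HasDerivWithinAt (G ηθ · θ) (ηθ t θ) J t) :
    HasDerivWithinAt (y γ σ ηθ ηθθ · θ) (yt γ σ ηθ ηtθ ηθθ ηtθθ t θ) J t :=
  (((hasDerivWithinAt_xθ hpos hηθt hηθθt).const_mul (-γ)).add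
    (((hasDerivWithinAt_x hpos hηθt).const_mul σ).mul hG)).congr_deriv
    (by simp only [yt]; ring)

theorem hasDerivWithinAt_yt (hγ : γ * (lam - 1) = 2) (hpos : 0 < ηθ t θ)
    (hηθt : HasDerivWithinAt (ηθ · θ) (ηtθ t θ) J t)
    (hxt : HasDerivWithinAt (xt γ ηθ ηtθ · θ) (F lam σ ηt ηθ ηtθ t θ * x γ ηθ t θ) J t)
    (hxtθ : HasDerivWithinAt (xtθ γ ηθ ηtθ ηθθ ηtθθ · θ) (xttθ lam γ σ ηt ηθ ηtθ ηθθ t θ) J t)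
    (hG : HasDerivWithinAt (G ηθ · θ) (ηθ t θ) J t) :
    HasDerivWithinAt (yt γ σ ηθ ηtθ ηθθ ηtθθ · θ)
      (F lam σ ηt ηθ ηtθ t θ * y γ σ ηθ ηθθ t θ) J t := by
  refine ((hxtθ.const_mul (-γ)).add (((hxt.mul hG).add
    ((hasDerivWithinAt_x hpos hηθt).mul hηθt)).const_mul σ)).congr_deriv ?_
  have hxtηθ : xt γ ηθ ηtθ t θ * ηθ t θ = 1 / γ * x γ ηθ t θ * ηtθ t θ := by
    simp only [xt, x]
    rw [Real.rpow_sub_one hpos.ne']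
    field_simp
  simp only [xttθ, y] at hxtηθ ⊢
  rw [hxtηθ, one_div_eq_of_mul_sub_one_eq_two hγ]
  linear_combination (-σ * lam / 2 * ηtθ t θ * x γ ηθ t θ) * hγ

theorem energy_eq (hγ : γ ≠ 0) (hpos : ∀ θ, 0 < ηθ t θ) :
    energy ηθ ηtθ t = γ ^ 2 * ∫ θ in (0:ℝ)..1, x γ ηθ t θ ^ (γ - 2) * xt γ ηθ ηtθ t θ ^ 2 := by
  rw [← intervalIntegral.integral_const_mul]
  exact intervalIntegral.integral_congr fun θ _ => sq_div_eq_mul_rpow hγ (hpos θ)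

theorem hasDerivWithinAt_G {T : EReal}
    (hηθc : ContinuousOn (uncurry ηθ) (timeInterval T ×ˢ univ)) (ht : t ∈ timeInterval T)
    (θ : ℝ) : HasDerivWithinAt (G ηθ · θ) (ηθ t θ) (timeInterval T) t :=
  hasDerivWithinAt_integral_timeInterval (hηθc.uncurry_right θ (mem_univ θ)) ht

theorem hasDerivWithinAt_xtθ {T : EReal} (hγ : γ * (lam - 1) = 2)
    (hpos : ∀ t ∈ timeInterval T, ∀ θ, 0 < ηθ t θ)
    (hηθt : ∀ θ, ∀ t ∈ timeInterval T, HasDerivWithinAt (ηθ · θ) (ηtθ t θ) (timeInterval T) t)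
    (hηtθ : ∀ t ∈ timeInterval T, ∀ θ, HasDerivAt (ηt t) (ηtθ t θ) θ)
    (hηθθ : ∀ t ∈ timeInterval T, ∀ θ, HasDerivAt (ηθ t) (ηθθ t θ) θ)
    (hηttθ : ∀ θ, ∀ t ∈ timeInterval T,
      HasDerivWithinAt (ηtθ · θ) (ηttθ t θ) (timeInterval T) t)
    (hηtθθ : ∀ t ∈ timeInterval T, ∀ θ, HasDerivAt (ηtθ t) (ηtθθ t θ) θ)
    (hηθc : ContinuousOn (uncurry ηθ) (timeInterval T ×ˢ univ))
    (hηtθc : ContinuousOn (uncurry ηtθ) (timeInterval T ×ˢ univ))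
    (hηθθc : ContinuousOn (uncurry ηθθ) (timeInterval T ×ˢ univ))
    (hηttθc : ContinuousOn (uncurry ηttθ) (timeInterval T ×ˢ univ))
    (hPDE : ∀ t ∈ timeInterval T, ∀ θ, ηttθ t θ = -((lam - 3) / 2) * ηtθ t θ ^ 2 / ηθ t θ
      + (lam * σ * (ηt t θ - σ) + (lam - 3) / 2 * energy ηθ ηtθ t) * ηθ t θ)
    (ht : t ∈ timeInterval T) (θ : ℝ) :
    HasDerivWithinAt (xtθ γ ηθ ηtθ ηθθ ηtθθ · θ) (xttθ lam γ σ ηt ηθ ηtθ ηθθ t θ)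
      (timeInterval T) t := by
  have hF := continuousOn_F hpos hηθc hηtθc hηttθc hPDE
  exact hasDerivWithinAt_timeInterval_of_mixed_partials
    (fun t ht θ => hasDerivAt_xt (hpos t ht θ) (hηθθ t ht θ) (hηtθθ t ht θ))
    (fun t ht θ =>
      hasDerivWithinAt_xt hγ (hpos t ht θ) (hηθt θ t ht) (hηttθ θ t ht) (hPDE t ht θ))
    (fun θ => ContinuousOn.uncurry_right (f := fun t θ => F lam σ ηt ηθ ηtθ t θ * x γ ηθ t θ)
      θ (mem_univ θ) (hF.mul (continuousOn_x hpos hηθc)))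
    (fun t ht θ => hasDerivAt_F_mul_x (hpos t ht θ) (hηtθ t ht θ) (hηθθ t ht θ))
    (continuousOn_xttθ hpos hηθc hηtθc hηθθc hF) ht θ

theorem y_eq (hγ : γ ≠ 0) (ht : 0 ≤ t) (hpos : ∀ τ ∈ Icc 0 t, 0 < ηθ τ θ)
    (hηθθ : HasDerivAt (ηθ t) (ηθθ t θ) θ) :
    y γ σ ηθ ηθθ t θ
      = -γ * deriv (x γ ηθ t) θ + σ * x γ ηθ t θ * ∫ τ in (0:ℝ)..t, x γ ηθ τ θ ^ γ := by
  rw [(hasDerivAt_x (hpos t ⟨ht, le_rfl⟩) hηθθ).deriv, y, G]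
  congr 2
  refine intervalIntegral.integral_congr fun τ hτ => ?_
  rw [uIcc_of_le ht] at hτ
  rw [x, ← Real.rpow_mul (hpos τ hτ).le, one_div_mul_cancel hγ, Real.rpow_one]

theorem initial_values {η : ℝ → ℝ → ℝ} {u₀ : ℝ → ℝ} (hγ : γ ≠ 0) (hη0 : ∀ θ, η 0 θ = θ)
    (hηt0 : ∀ θ, ηt 0 θ = u₀ θ) (hηθ : ∀ θ, HasDerivAt (η 0) (ηθ 0 θ) θ)
    (hηtθ : ∀ θ, HasDerivAt (ηt 0) (ηtθ 0 θ) θ) (hηθθ : ∀ θ, HasDerivAt (ηθ 0) (ηθθ 0 θ) θ)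
    (hηtθθ : ∀ θ, HasDerivAt (ηtθ 0) (ηtθθ 0 θ) θ) :
    (∀ θ, x γ ηθ 0 θ = 1) ∧ (∀ θ, xt γ ηθ ηtθ 0 θ = deriv u₀ θ / γ) ∧
      (∀ θ, y γ σ ηθ ηθθ 0 θ = 0) ∧
      (∀ θ, yt γ σ ηθ ηtθ ηθθ ηtθθ 0 θ = σ - deriv (deriv u₀) θ) := by
  have hηθ0 : ηθ 0 = 1 := funext fun θ => by
    rw [← (hηθ θ).deriv, show η 0 = id from funext hη0, deriv_id, Pi.one_apply]
  have hηtθ0 : ηtθ 0 = deriv u₀ := funext fun θ => by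
    rw [← (hηtθ θ).deriv, show ηt 0 = u₀ from funext hηt0]
  have hηθθ0 : ηθθ 0 = 0 := funext fun θ => by
    rw [← (hηθθ θ).deriv, hηθ0, Pi.one_def, deriv_const, Pi.zero_apply]
  have hηtθθ0 : ηtθθ 0 = deriv (deriv u₀) := funext fun θ => by
    rw [← (hηtθθ θ).deriv, hηtθ0]
  refine ⟨fun θ => ?_, fun θ => ?_, fun θ => ?_, fun θ => ?_⟩ <;>
    simp [x, xt, xθ, xtθ, y, yt, G, hηθ0, hηtθ0, hηθθ0, hηtθθ0, hγ]
  all_goals ring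

end SolarTransform

end

open SolarTransform

theorem stmt_5_general (lam : ℝ) (hlam : lam ≠ 1) (γ : ℝ) (hγ : γ = 2 / (lam - 1))
    (σ : ℝ) (u₀ : ℝ → ℝ)
    (T : EReal) (hT : 0 < T)
    (J : Set ℝ) (hJ : J = {t : ℝ | 0 ≤ t ∧ (t : EReal) < T})
    -- η is a C³ family of circle diffeomorphisms, with partial derivatives
    -- ηt = η_t, ηθ = η_θ, ηtθ = η_tθ, ηθθ = η_θθ, ηttθ = η_ttθ, ηtθθ = η_tθθ
    (η ηt ηθ ηtθ ηθθ ηttθ ηtθθ : ℝ → ℝ → ℝ)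
    (hη0 : ∀ θ : ℝ, η 0 θ = θ)
    (hηt0 : ∀ θ : ℝ, ηt 0 θ = u₀ θ)
    (hηθpos : ∀ t ∈ J, ∀ θ : ℝ, 0 < ηθ t θ)
    (hηθ : ∀ t ∈ J, ∀ θ : ℝ, HasDerivAt (η t) (ηθ t θ) θ)
    (hηtθ : ∀ t ∈ J, ∀ θ : ℝ, HasDerivAt (ηt t) (ηtθ t θ) θ)
    (hηθθ : ∀ t ∈ J, ∀ θ : ℝ, HasDerivAt (ηθ t) (ηθθ t θ) θ)
    (hηθt : ∀ θ : ℝ, ∀ t ∈ J, HasDerivWithinAt (fun s => ηθ s θ) (ηtθ t θ) J t)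
    (hηttθ : ∀ θ : ℝ, ∀ t ∈ J, HasDerivWithinAt (fun s => ηtθ s θ) (ηttθ t θ) J t)
    (hηtθθ : ∀ t ∈ J, ∀ θ : ℝ, HasDerivAt (ηtθ t) (ηtθθ t θ) θ)
    (hηθθt : ∀ θ : ℝ, ∀ t ∈ J, HasDerivWithinAt (fun s => ηθθ s θ) (ηtθθ t θ) J t)
    (hηθc : ContinuousOn (fun p : ℝ × ℝ => ηθ p.1 p.2) (J ×ˢ univ))
    (hηtθc : ContinuousOn (fun p : ℝ × ℝ => ηtθ p.1 p.2) (J ×ˢ univ))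
    (hηθθc : ContinuousOn (fun p : ℝ × ℝ => ηθθ p.1 p.2) (J ×ˢ univ))
    (hηttθc : ContinuousOn (fun p : ℝ × ℝ => ηttθ p.1 p.2) (J ×ˢ univ))
    -- the Lagrangian form of the μ-λ equation
    (hPDE : ∀ t ∈ J, ∀ θ : ℝ, ηttθ t θ
        = -((lam - 3) / 2) * ηtθ t θ ^ 2 / ηθ t θ
          + (lam * σ * (ηt t θ - σ)
              + (lam - 3) / 2 * (∫ φ in (0:ℝ)..1, ηtθ t φ ^ 2 / ηθ t φ)) * ηθ t θ) :
    ∃ X Xt Y Yt F : ℝ → ℝ → ℝ,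
      -- the definitions of x, y, F
      (∀ t ∈ J, ∀ θ : ℝ, X t θ = ηθ t θ ^ (1 / γ)) ∧
      (∀ t ∈ J, ∀ θ : ℝ,
        Y t θ = -γ * deriv (X t) θ + σ * X t θ * ∫ τ in (0:ℝ)..t, X τ θ ^ γ) ∧
      (∀ t ∈ J, ∀ θ : ℝ, F t θ = lam * (lam - 1) * σ / 2 * (ηt t θ - σ)
          + (lam - 1) * (lam - 3) / 4 * (∫ φ in (0:ℝ)..1, ηtθ t φ ^ 2 / ηθ t φ)) ∧
      -- the central force system x_tt = F x, y_tt = F y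
      (∀ θ : ℝ, ∀ t ∈ J, HasDerivWithinAt (fun s => X s θ) (Xt t θ) J t) ∧
      (∀ θ : ℝ, ∀ t ∈ J, HasDerivWithinAt (fun s => Xt s θ) (F t θ * X t θ) J t) ∧
      (∀ θ : ℝ, ∀ t ∈ J, HasDerivWithinAt (fun s => Y s θ) (Yt t θ) J t) ∧
      (∀ θ : ℝ, ∀ t ∈ J, HasDerivWithinAt (fun s => Yt s θ) (F t θ * Y t θ) J t) ∧
      -- the energy E(t) in the transformed variables
      (∀ t ∈ J, (∫ φ in (0:ℝ)..1, ηtθ t φ ^ 2 / ηθ t φ)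
          = γ ^ 2 * ∫ φ in (0:ℝ)..1, X t φ ^ (γ - 2) * Xt t φ ^ 2) ∧
      -- the initial conditions
      (∀ θ : ℝ, X 0 θ = 1) ∧
      (∀ θ : ℝ, Xt 0 θ = deriv u₀ θ / γ) ∧
      (∀ θ : ℝ, Y 0 θ = 0) ∧
      (∀ θ : ℝ, Yt 0 θ = σ - deriv (deriv u₀) θ) := by
  subst hJ
  have hγlam : γ * (lam - 1) = 2 := by rw [hγ]; field_simp [sub_ne_zero.mpr hlam]
  have hγ0 : γ ≠ 0 := left_ne_zero_of_mul (by rw [hγlam]; norm_num)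
  have hJ0 : (0 : ℝ) ∈ timeInterval T := ⟨le_rfl, mod_cast hT⟩
  have hxt θ t ht := hasDerivWithinAt_xt (σ := σ) hγlam (hηθpos t ht θ) (hηθt θ t ht)
    (hηttθ θ t ht) (hPDE t ht θ)
  refine ⟨x γ ηθ, xt γ ηθ ηtθ, y γ σ ηθ ηθθ, yt γ σ ηθ ηtθ ηθθ ηtθθ, F lam σ ηt ηθ ηtθ,
    fun _ _ _ => rfl,
    fun t ht θ => y_eq hγ0 ht.1 (fun τ hτ => hηθpos τ (Icc_zero_subset_timeInterval ht hτ) θ)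
      (hηθθ t ht θ),
    fun _ _ _ => rfl,
    fun θ t ht => hasDerivWithinAt_x (hηθpos t ht θ) (hηθt θ t ht),
    hxt,
    fun θ t ht => hasDerivWithinAt_y (hηθpos t ht θ) (hηθt θ t ht) (hηθθt θ t ht)
      (hasDerivWithinAt_G hηθc ht θ),
    fun θ t ht => hasDerivWithinAt_yt hγlam (hηθpos t ht θ) (hηθt θ t ht) (hxt θ t ht)
      (hasDerivWithinAt_xtθ hγlam hηθpos hηθt hηtθ hηθθ hηttθ hηtθθ hηθc hηtθc hηθθc hηttθc
        hPDE ht θ)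
      (hasDerivWithinAt_G hηθc ht θ),
    fun t ht => energy_eq hγ0 (hηθpos t ht),
    initial_values hγ0 hη0 hηt0 (hηθ 0 hJ0) (hηtθ 0 hJ0) (hηθθ 0 hJ0) (hηtθθ 0 hJ0)⟩

/-- the general transformation to the solar model. With γ = 2/(λ-1),
x = η_θ^{1/γ} and y = -γ x_θ + σ x ∫₀ᵗ x^γ dτ satisfy the central force system
x_tt = F x, y_tt = F y with F = (λ(λ-1)σ/2)(η_t - σ) + ((λ-1)(λ-3)/4) E(t),
E(t) = ∫₀¹ η_tθ²/η_θ = γ² ∫₀¹ x^{γ-2} x_t², and initial conditions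
x(0)=1, x_t(0)=u₀'/γ, y(0)=0, y_t(0)=σ-u₀''. -/
theorem stmt_5 (lam : ℝ) (hlam : lam ≠ 1) (γ : ℝ) (hγ : γ = 2 / (lam - 1))
    (σ : ℝ) (u₀ : ℝ → ℝ) (hu₀ : ContDiff ℝ 2 u₀) (hu₀per : ∀ θ : ℝ, u₀ (θ + 1) = u₀ θ)
    (T : EReal) (hT : 0 < T)
    (J : Set ℝ) (hJ : J = {t : ℝ | 0 ≤ t ∧ (t : EReal) < T})
    -- η is a C³ family of circle diffeomorphisms, with partial derivatives
    -- ηt = η_t, ηθ = η_θ, ηtθ = η_tθ, ηθθ = η_θθ, ηttθ = η_ttθ, ηtθθ = η_tθθ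
    (η ηt ηθ ηtθ ηθθ ηttθ ηtθθ : ℝ → ℝ → ℝ)
    (hη0 : ∀ θ : ℝ, η 0 θ = θ)
    (hηt0 : ∀ θ : ℝ, ηt 0 θ = u₀ θ)
    (hηper : ∀ t ∈ J, ∀ θ : ℝ, η t (θ + 1) = η t θ + 1)
    (hηθpos : ∀ t ∈ J, ∀ θ : ℝ, 0 < ηθ t θ)
    (hηt : ∀ θ : ℝ, ∀ t ∈ J, HasDerivWithinAt (fun s => η s θ) (ηt t θ) J t)
    (hηθ : ∀ t ∈ J, ∀ θ : ℝ, HasDerivAt (η t) (ηθ t θ) θ)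
    (hηtθ : ∀ t ∈ J, ∀ θ : ℝ, HasDerivAt (ηt t) (ηtθ t θ) θ)
    (hηθθ : ∀ t ∈ J, ∀ θ : ℝ, HasDerivAt (ηθ t) (ηθθ t θ) θ)
    (hηθt : ∀ θ : ℝ, ∀ t ∈ J, HasDerivWithinAt (fun s => ηθ s θ) (ηtθ t θ) J t)
    (hηttθ : ∀ θ : ℝ, ∀ t ∈ J, HasDerivWithinAt (fun s => ηtθ s θ) (ηttθ t θ) J t)
    (hηtθθ : ∀ t ∈ J, ∀ θ : ℝ, HasDerivAt (ηtθ t) (ηtθθ t θ) θ)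
    (hηθθt : ∀ θ : ℝ, ∀ t ∈ J, HasDerivWithinAt (fun s => ηθθ s θ) (ηtθθ t θ) J t)
    (hηθc : ContinuousOn (fun p : ℝ × ℝ => ηθ p.1 p.2) (J ×ˢ univ))
    (hηtθc : ContinuousOn (fun p : ℝ × ℝ => ηtθ p.1 p.2) (J ×ˢ univ))
    (hηθθc : ContinuousOn (fun p : ℝ × ℝ => ηθθ p.1 p.2) (J ×ˢ univ))
    (hηttθc : ContinuousOn (fun p : ℝ × ℝ => ηttθ p.1 p.2) (J ×ˢ univ))
    (hηtθθc : ContinuousOn (fun p : ℝ × ℝ => ηtθθ p.1 p.2) (J ×ˢ univ))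
    -- the Lagrangian form of the μ-λ equation
    (hPDE : ∀ t ∈ J, ∀ θ : ℝ, ηttθ t θ
        = -((lam - 3) / 2) * ηtθ t θ ^ 2 / ηθ t θ
          + (lam * σ * (ηt t θ - σ)
              + (lam - 3) / 2 * (∫ φ in (0:ℝ)..1, ηtθ t φ ^ 2 / ηθ t φ)) * ηθ t θ) :
    ∃ X Xt Y Yt F : ℝ → ℝ → ℝ,
      -- the definitions of x, y, F
      (∀ t ∈ J, ∀ θ : ℝ, X t θ = ηθ t θ ^ (1 / γ)) ∧
      (∀ t ∈ J, ∀ θ : ℝ,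
        Y t θ = -γ * deriv (X t) θ + σ * X t θ * ∫ τ in (0:ℝ)..t, X τ θ ^ γ) ∧
      (∀ t ∈ J, ∀ θ : ℝ, F t θ = lam * (lam - 1) * σ / 2 * (ηt t θ - σ)
          + (lam - 1) * (lam - 3) / 4 * (∫ φ in (0:ℝ)..1, ηtθ t φ ^ 2 / ηθ t φ)) ∧
      -- the central force system x_tt = F x, y_tt = F y
      (∀ θ : ℝ, ∀ t ∈ J, HasDerivWithinAt (fun s => X s θ) (Xt t θ) J t) ∧
      (∀ θ : ℝ, ∀ t ∈ J, HasDerivWithinAt (fun s => Xt s θ) (F t θ * X t θ) J t) ∧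
      (∀ θ : ℝ, ∀ t ∈ J, HasDerivWithinAt (fun s => Y s θ) (Yt t θ) J t) ∧
      (∀ θ : ℝ, ∀ t ∈ J, HasDerivWithinAt (fun s => Yt s θ) (F t θ * Y t θ) J t) ∧
      -- the energy E(t) in the transformed variables
      (∀ t ∈ J, (∫ φ in (0:ℝ)..1, ηtθ t φ ^ 2 / ηθ t φ)
          = γ ^ 2 * ∫ φ in (0:ℝ)..1, X t φ ^ (γ - 2) * Xt t φ ^ 2) ∧
      -- the initial conditions
      (∀ θ : ℝ, X 0 θ = 1) ∧
      (∀ θ : ℝ, Xt 0 θ = deriv u₀ θ / γ) ∧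
      (∀ θ : ℝ, Y 0 θ = 0) ∧
      (∀ θ : ℝ, Yt 0 θ = σ - deriv (deriv u₀) θ) :=
  stmt_5_general lam hlam γ hγ σ u₀ T hT J hJ η ηt ηθ ηtθ ηθθ ηttθ ηtθθ hη0 hηt0 hηθpos hηθ hηtθ
    hηθθ hηθt hηttθ hηtθθ hηθθt hηθc hηtθc hηθθc hηttθc hPDE
end

section
/- Let λ ≠ 1, γ = 2/(λ−1), σ ∈ ℝ, u₀ ∈ C²(ℝ) 1-periodic, and let η : [0,T) × ℝ → ℝ be C³ with η(t,θ+1) = η(t,θ)+1, η_θ > 0, η(0,θ) = θ, η_t(0,θ) = u₀(θ), satisfying η_ttθ = −((λ−3)/2) η_tθ²/η_θ + [λσ(η_t − σ) + ((λ−3)/2) E(t)] η_θ with E(t) = ∫₀¹ η_tθ²/η_θ dφ. Define x = η_θ^{1/γ} and y = −γ x_θ + σ x ∫₀ᵗ x(τ,·)^γ dτ. Then the angular momentum x(t,θ) y_t(t,θ) − y(t,θ) x_t(t,θ) is independent of t and equals m₀(θ) = σ − u₀''(θ) for all (t,θ); moreover it satisfies the identity x y_t − y x_t = σ η_θ^λ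 − η_θ^{λ−1} ∂_θ(η_tθ/η_θ). -/
/-!
Write a = η_θ and w = ∂_θ(η_tθ/η_θ). The quantity σ a^λ − a^{λ−1} w is the transported momentum
(m ∘ η)·η_θ^λ, and it is conserved. By the equation, ∂_t(η_tθ/η_θ) equals
−((λ−1)/2)(η_tθ/η_θ)² + λσ(η_t − σ) plus the θ-independent term ((λ−3)/2)E(t). Differentiating in θ
and exchanging ∂_t and ∂_θ (write η_tθ/η_θ as its initial value plus a time integral and
differentiate under the integral sign) gives w_t = −(λ−1)(η_tθ/η_θ) w + λσ η_tθ, which makes the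
time derivative of σ a^λ − a^{λ−1} w vanish. At t = 0 we have a = 1 and w = u₀'', so the constant
is m₀. The identity x y_t − y x_t = σ a^λ − a^{λ−1} w is a direct computation from x = a^{1/γ},
2/γ = λ − 1 and (∫₀ᵗ x^γ)_t = a.
-/

open Set Filter Topology MeasureTheory

theorem Set.OrdConnected.exists_Icc_mem_nhdsWithin {J : Set ℝ} (hJ : J.OrdConnected) {t : ℝ}
    (ht : t ∈ J) : ∃ a b, t ∈ Icc a b ∧ Icc a b ⊆ J ∧ Icc a b ∈ 𝓝[J] t := by
  obtain ⟨a, hat, haJ, hleft⟩ : ∃ a ≤ t, a ∈ J ∧ Icc a t ∈ 𝓝[J ∩ Iic t] t := by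
    by_cases h : ∃ s ∈ J, s < t
    · obtain ⟨s, hsJ, hst⟩ := h
      exact ⟨s, hst.le, hsJ, nhdsWithin_mono _ inter_subset_right (Icc_mem_nhdsLE hst)⟩
    · push Not at h
      exact ⟨t, le_rfl, ht, mem_of_superset self_mem_nhdsWithin fun s hs => ⟨h s hs.1, hs.2⟩⟩
  obtain ⟨b, htb, hbJ, hright⟩ : ∃ b ≥ t, b ∈ J ∧ Icc t b ∈ 𝓝[J ∩ Ici t] t := by
    by_cases h : ∃ s ∈ J, t < s
    · obtain ⟨s, hsJ, hts⟩ := h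
      exact ⟨s, hts.le, hsJ, nhdsWithin_mono _ inter_subset_right (Icc_mem_nhdsGE hts)⟩
    · push Not at h
      exact ⟨t, le_rfl, ht, mem_of_superset self_mem_nhdsWithin fun s hs => ⟨hs.2, h s hs.1⟩⟩
  refine ⟨a, b, ⟨hat, htb⟩, hJ.out haJ hbJ, ?_⟩
  rw [← inter_univ J, ← Iic_union_Ici (a := t), inter_union_distrib_left, nhdsWithin_union]
  exact ⟨mem_of_superset hleft (Icc_subset_Icc_right htb),
    mem_of_superset hright (Icc_subset_Icc_left hat)⟩

section OrdConnected

variable {E : Type*} [NormedAddCommGroup E] [NormedSpace ℝ E] {J : Set ℝ} {a b t : ℝ}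

theorem hasDerivWithinAt_integral_of_ordConnected [CompleteSpace E] {g : ℝ → E}
    (hJ : J.OrdConnected) (hg : ContinuousOn g J) (ha : a ∈ J) (ht : t ∈ J) :
    HasDerivWithinAt (fun u => ∫ τ in a..u, g τ) (g t) J t := by
  obtain ⟨a', b', htI, hIJ, hI⟩ := hJ.exists_Icc_mem_nhdsWithin ht
  have : Fact (t ∈ Icc a' b') := ⟨htI⟩
  have hgI := hg.mono hIJ
  exact (intervalIntegral.integral_hasDerivWithinAt_right
    ((hg.mono (hJ.uIcc_subset ha ht)).intervalIntegrable)
    (hgI.stronglyMeasurableAtFilter_nhdsWithin measurableSet_Icc t)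
    (hgI t htI)).mono_of_mem_nhdsWithin hI

theorem Set.OrdConnected.eq_of_hasDerivWithinAt_zero {f : ℝ → E} (hJ : J.OrdConnected)
    (hf : ∀ s ∈ J, HasDerivWithinAt f 0 J s) (ha : a ∈ J) (hb : b ∈ J) : f b = f a := by
  have h := hJ.convex.norm_image_sub_le_of_norm_hasDerivWithin_le hf
    (fun _ _ => norm_zero.le) ha hb
  rwa [zero_mul, norm_le_zero_iff, sub_eq_zero] at h

theorem integral_eq_sub_of_hasDerivWithinAt_of_ordConnected_s6 [CompleteSpace E] {f f' : ℝ → E}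
    (hJ : J.OrdConnected) (hf : ∀ s ∈ J, HasDerivWithinAt f (f' s) J s)
    (hf' : ContinuousOn f' J) (ha : a ∈ J) (hb : b ∈ J) :
    ∫ τ in a..b, f' τ = f b - f a := by
  have hconst := hJ.eq_of_hasDerivWithinAt_zero (f := fun u => f u - ∫ τ in a..u, f' τ)
    (fun s hs => ((hf s hs).sub (hasDerivWithinAt_integral_of_ordConnected hJ hf' ha hs))
      |>.congr_deriv (sub_self _)) ha hb
  simp only [intervalIntegral.integral_same, sub_zero] at hconst
  rw [← hconst]; abel

theorem hasDerivAt_intervalIntegral_of_continuousOn [CompleteSpace E] {F F' : ℝ → ℝ → E} {x₀ : ℝ}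
    (hF : ContinuousOn (fun p : ℝ × ℝ => F p.1 p.2) (uIcc a b ×ˢ univ))
    (hF' : ContinuousOn (fun p : ℝ × ℝ => F' p.1 p.2) (uIcc a b ×ˢ univ))
    (hderiv : ∀ τ ∈ uIcc a b, ∀ x, HasDerivAt (F τ) (F' τ x) x) :
    HasDerivAt (fun x => ∫ τ in a..b, F τ x) (∫ τ in a..b, F' τ x₀) x₀ := by
  have hslice : ∀ x, ContinuousOn (fun τ => F τ x) (uIcc a b) :=
    fun x => hF.uncurry_right x (mem_univ x)
  obtain ⟨C, hC⟩ := (isCompact_uIcc.prod (isCompact_closedBall x₀ 1)).exists_bound_of_continuousOn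
    (hF'.mono (prod_mono subset_rfl (subset_univ _)))
  exact (intervalIntegral.hasDerivAt_integral_of_dominated_loc_of_deriv_le
    (F := fun x τ => F τ x) (F' := fun x τ => F' τ x) (bound := fun _ => C)
    (Metric.ball_mem_nhds x₀ one_pos)
    (Eventually.of_forall fun x =>
      ((hslice x).mono uIoc_subset_uIcc).aestronglyMeasurable measurableSet_uIoc)
    (hslice x₀).intervalIntegrable
    (((hF'.uncurry_right x₀ (mem_univ x₀)).mono uIoc_subset_uIcc).aestronglyMeasurable
      measurableSet_uIoc)
    (ae_of_all _ fun τ hτ x hx =>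
      hC (τ, x) ⟨uIoc_subset_uIcc hτ, Metric.ball_subset_closedBall hx⟩)
    intervalIntegrable_const
    (ae_of_all _ fun τ hτ x _ => hderiv τ (uIoc_subset_uIcc hτ) x)).2

theorem hasDerivWithinAt_mixed_partial [CompleteSpace E] {f ft fθ ftθ : ℝ → ℝ → E}
    (hJ : J.OrdConnected)
    (hft : ∀ θ, ∀ s ∈ J, HasDerivWithinAt (fun r => f r θ) (ft s θ) J s)
    (hfθ : ∀ s ∈ J, ∀ θ, HasDerivAt (f s) (fθ s θ) θ)
    (hftθ : ∀ s ∈ J, ∀ θ, HasDerivAt (ft s) (ftθ s θ) θ)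
    (hftc : ContinuousOn (fun p : ℝ × ℝ => ft p.1 p.2) (J ×ˢ univ))
    (hftθc : ContinuousOn (fun p : ℝ × ℝ => ftθ p.1 p.2) (J ×ˢ univ)) (ht : t ∈ J) (θ : ℝ) :
    HasDerivWithinAt (fun s => fθ s θ) (ftθ t θ) J t := by
  have hfθ_sub : ∀ s ∈ J, fθ s θ - fθ t θ = ∫ τ in t..s, ftθ τ θ := by
    intro s hs
    have hI := hJ.uIcc_subset ht hs
    have hint := hasDerivAt_intervalIntegral_of_continuousOn (x₀ := θ)
      (hftc.mono (prod_mono hI subset_rfl)) (hftθc.mono (prod_mono hI subset_rfl))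
      fun τ hτ x => hftθ τ (hI hτ) x
    have hF_eq : (fun x => ∫ τ in t..s, ft τ x) = fun x => f s x - f t x := funext fun x =>
      integral_eq_sub_of_hasDerivWithinAt_of_ordConnected_s6 hJ (hft x)
        (hftc.uncurry_right x (mem_univ x)) ht hs
    rw [hF_eq] at hint
    exact ((hfθ s hs θ).sub (hfθ t ht θ)).unique hint
  refine ((hasDerivWithinAt_integral_of_ordConnected hJ (hftθc.uncurry_right θ (mem_univ θ))
    ht ht).const_add (fθ t θ)).congr_of_mem (fun s hs => ?_) ht
  rw [← hfθ_sub s hs, add_sub_cancel]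

end OrdConnected

theorem hasDerivWithinAt_ratio_deriv {J : Set ℝ} {lam σ t : ℝ} {E : ℝ → ℝ}
    {ηt ηθ ηtθ ηθθ ηttθ ηtθθ : ℝ → ℝ → ℝ} (hJ : J.OrdConnected)
    (hηθpos : ∀ t ∈ J, ∀ θ : ℝ, 0 < ηθ t θ)
    (hηtθ : ∀ t ∈ J, ∀ θ : ℝ, HasDerivAt (ηt t) (ηtθ t θ) θ)
    (hηθθ : ∀ t ∈ J, ∀ θ : ℝ, HasDerivAt (ηθ t) (ηθθ t θ) θ)
    (hηθt : ∀ θ : ℝ, ∀ t ∈ J, HasDerivWithinAt (fun s => ηθ s θ) (ηtθ t θ) J t)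
    (hηttθ : ∀ θ : ℝ, ∀ t ∈ J, HasDerivWithinAt (fun s => ηtθ s θ) (ηttθ t θ) J t)
    (hηtθθ : ∀ t ∈ J, ∀ θ : ℝ, HasDerivAt (ηtθ t) (ηtθθ t θ) θ)
    (hηθc : ContinuousOn (fun p : ℝ × ℝ => ηθ p.1 p.2) (J ×ˢ univ))
    (hηtθc : ContinuousOn (fun p : ℝ × ℝ => ηtθ p.1 p.2) (J ×ˢ univ))
    (hηθθc : ContinuousOn (fun p : ℝ × ℝ => ηθθ p.1 p.2) (J ×ˢ univ))
    (hηttθc : ContinuousOn (fun p : ℝ × ℝ => ηttθ p.1 p.2) (J ×ˢ univ))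
    (hηtθθc : ContinuousOn (fun p : ℝ × ℝ => ηtθθ p.1 p.2) (J ×ˢ univ))
    (hPDE : ∀ t ∈ J, ∀ θ : ℝ, ηttθ t θ
        = -((lam - 3) / 2) * ηtθ t θ ^ 2 / ηθ t θ
          + (lam * σ * (ηt t θ - σ) + (lam - 3) / 2 * E t) * ηθ t θ)
    (ht : t ∈ J) (θ : ℝ) :
    HasDerivWithinAt (fun s => (ηtθθ s θ * ηθ s θ - ηtθ s θ * ηθθ s θ) / ηθ s θ ^ 2)
      (-(lam - 1) * (ηtθ t θ / ηθ t θ)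
          * ((ηtθθ t θ * ηθ t θ - ηtθ t θ * ηθθ t θ) / ηθ t θ ^ 2)
        + lam * σ * ηtθ t θ) J t := by
  have hne : ∀ q ∈ J ×ˢ (univ : Set ℝ), ηθ q.1 q.2 ≠ 0 := fun q hq => (hηθpos _ hq.1 _).ne'
  have hratio_t : ∀ s ∈ J, ∀ ψ, (ηttθ s ψ * ηθ s ψ - ηtθ s ψ * ηtθ s ψ) / ηθ s ψ ^ 2
      = -((lam - 1) / 2) * (ηtθ s ψ / ηθ s ψ) ^ 2 + lam * σ * (ηt s ψ - σ)
        + (lam - 3) / 2 * E s := by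
    intro s hs ψ
    have hsψ := hne (s, ψ) ⟨hs, mem_univ ψ⟩
    rw [hPDE s hs ψ]
    field_simp
    ring
  refine hasDerivWithinAt_mixed_partial hJ (f := fun s ψ => ηtθ s ψ / ηθ s ψ)
    (ftθ := fun s ψ => -(lam - 1) * (ηtθ s ψ / ηθ s ψ)
        * ((ηtθθ s ψ * ηθ s ψ - ηtθ s ψ * ηθθ s ψ) / ηθ s ψ ^ 2) + lam * σ * ηtθ s ψ)
    (fun ψ s hs => (hηttθ ψ s hs).div (hηθt ψ s hs) (hηθpos s hs ψ).ne')
    (fun s hs ψ => (hηtθθ s hs ψ).div (hηθθ s hs ψ) (hηθpos s hs ψ).ne')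
    (fun s hs ψ => ?_)
    (((hηttθc.mul hηθc).sub (hηtθc.mul hηtθc)).div (hηθc.pow 2)
      fun q hq => pow_ne_zero 2 (hne q hq))
    (((continuousOn_const.mul (hηtθc.div hηθc hne)).mul
      (((hηtθθc.mul hηθc).sub (hηtθc.mul hηθθc)).div (hηθc.pow 2)
        fun q hq => pow_ne_zero 2 (hne q hq))).add (continuousOn_const.mul hηtθc)) ht θ
  rw [show (fun ψ => (ηttθ s ψ * ηθ s ψ - ηtθ s ψ * ηtθ s ψ) / ηθ s ψ ^ 2)
    = fun ψ => -((lam - 1) / 2) * (ηtθ s ψ / ηθ s ψ) ^ 2 + lam * σ * (ηt s ψ - σ)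
        + (lam - 3) / 2 * E s from funext (hratio_t s hs)]
  refine (((((hηtθθ s hs ψ).div (hηθθ s hs ψ) (hηθpos s hs ψ).ne').pow 2).const_mul _).add
    (((hηtθ s hs ψ).sub_const σ).const_mul _)).add_const _ |>.congr_deriv ?_
  simp only [Pi.div_apply]
  push_cast
  ring

theorem momentum_eq_of_hasDerivWithinAt {J : Set ℝ} {lam σ s t : ℝ} {a a' w : ℝ → ℝ}
    (hJ : J.OrdConnected) (ha : ∀ r ∈ J, 0 < a r)
    (had : ∀ r ∈ J, HasDerivWithinAt a (a' r) J r)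
    (hwd : ∀ r ∈ J, HasDerivWithinAt w (-(lam - 1) * (a' r / a r) * w r + lam * σ * a' r) J r)
    (hs : s ∈ J) (ht : t ∈ J) :
    σ * a t ^ lam - a t ^ (lam - 1) * w t = σ * a s ^ lam - a s ^ (lam - 1) * w s := by
  refine hJ.eq_of_hasDerivWithinAt_zero (f := fun r => σ * a r ^ lam - a r ^ (lam - 1) * w r)
    (fun r hr => ?_) hs ht
  have har := ha r hr
  refine (((had r hr).rpow_const (p := lam) (Or.inl har.ne')).const_mul σ |>.sub
    (((had r hr).rpow_const (p := lam - 1) (Or.inl har.ne')).mul (hwd r hr))).congr_deriv ?_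
  rw [Real.rpow_sub har (lam - 1) 1, Real.rpow_one]
  field_simp
  ring

theorem wronskian_eq_of_solar {s : Set ℝ} {t γ σ a' b' x' y' : ℝ} {a b H x y : ℝ → ℝ}
    (hs : UniqueDiffWithinAt ℝ s t) (ht : t ∈ s) (hγ : γ ≠ 0) (ha : 0 < a t)
    (had : HasDerivWithinAt a a' s t) (hbd : HasDerivWithinAt b b' s t)
    (hHd : HasDerivWithinAt H (a t) s t)
    (hx : ∀ r ∈ s, x r = a r ^ (1 / γ))
    (hy : ∀ r ∈ s, y r = -γ * (b r * (1 / γ) * a r ^ (1 / γ - 1)) + σ * x r * H r)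
    (hxd : HasDerivWithinAt x x' s t) (hyd : HasDerivWithinAt y y' s t) :
    x t * y' - y t * x'
      = σ * a t ^ (2 / γ + 1) - a t ^ (2 / γ) * ((b' * a t - a' * b t) / a t ^ 2) := by
  have hpow : ∀ q : ℝ, HasDerivWithinAt (fun r => a r ^ q) (a' * q * a t ^ (q - 1)) s t :=
    fun q => had.rpow_const (Or.inl ha.ne')
  have hx' := hs.eq_deriv _ hxd ((hpow (1 / γ)).congr_of_mem hx ht)
  have hy' := hs.eq_deriv _ hyd
    ((((hbd.mul_const (1 / γ)).mul (hpow (1 / γ - 1))).const_mul (-γ)).add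
      (((hpow (1 / γ)).const_mul σ).mul hHd) |>.congr_of_mem
      (fun r hr => by rw [hy r hr, hx r hr]; rfl) ht)
  rw [hx', hy', hy t ht, hx t ht]
  have e1 : a t ^ (1 / γ - 1) = a t ^ (1 / γ) / a t := by rw [Real.rpow_sub ha, Real.rpow_one]
  have e2 : a t ^ (1 / γ - 1 - 1) = a t ^ (1 / γ) / a t ^ 2 := by
    rw [Real.rpow_sub ha, Real.rpow_sub ha, Real.rpow_one, div_div, sq]
  have e3 : a t ^ (2 / γ) = a t ^ (1 / γ) * a t ^ (1 / γ) := by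
    rw [← Real.rpow_add ha]; ring_nf
  have e4 : a t ^ (2 / γ + 1) = a t ^ (1 / γ) * a t ^ (1 / γ) * a t := by
    rw [Real.rpow_add ha, Real.rpow_one, e3]
  rw [e1, e2, e4, e3]
  field_simp
  ring

theorem momentum_eq_of_id {σ lam θ b w : ℝ} {u₀ a v : ℝ → ℝ}
    (ha : ∀ ψ, HasDerivAt (fun ψ => ψ) (a ψ) ψ) (hb : HasDerivAt a b θ)
    (hv : ∀ ψ, HasDerivAt u₀ (v ψ) ψ) (hw : HasDerivAt v w θ) :
    σ * a θ ^ lam - a θ ^ (lam - 1) * ((w * a θ - v θ * b) / a θ ^ 2)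
      = σ - deriv (deriv u₀) θ := by
  have ha1 : a = fun _ => 1 := funext fun ψ => (ha ψ).unique (hasDerivAt_id' ψ)
  have hb0 : b = 0 := hb.unique (ha1 ▸ hasDerivAt_const θ 1)
  have hv' : v = deriv u₀ := funext fun ψ => (hv ψ).deriv.symm
  rw [hb0, ← hw.deriv, hv', ha1]
  simp

theorem solar_y_eq {J : Set ℝ} {γ σ θ r : ℝ} {ηθ ηθθ X Y : ℝ → ℝ → ℝ}
    (hJ : J.OrdConnected) (h0 : 0 ∈ J) (hγ : γ ≠ 0)
    (hηθpos : ∀ t ∈ J, ∀ θ : ℝ, 0 < ηθ t θ)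
    (hηθθ : ∀ t ∈ J, ∀ θ : ℝ, HasDerivAt (ηθ t) (ηθθ t θ) θ)
    (hX : ∀ t ∈ J, ∀ θ : ℝ, X t θ = ηθ t θ ^ (1 / γ))
    (hY : ∀ t ∈ J, ∀ θ : ℝ,
      Y t θ = -γ * deriv (X t) θ + σ * X t θ * ∫ τ in (0:ℝ)..t, X τ θ ^ γ)
    (hr : r ∈ J) :
    Y r θ = -γ * (ηθθ r θ * (1 / γ) * ηθ r θ ^ (1 / γ - 1))
      + σ * X r θ * ∫ τ in (0 : ℝ)..r, ηθ τ θ := by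
  have hderiv : deriv (X r) θ = ηθθ r θ * (1 / γ) * ηθ r θ ^ (1 / γ - 1) := by
    rw [funext (hX r hr)]
    exact ((hηθθ r hr θ).rpow_const (Or.inl (hηθpos r hr θ).ne')).deriv
  have hint : ∫ τ in (0 : ℝ)..r, X τ θ ^ γ = ∫ τ in (0 : ℝ)..r, ηθ τ θ :=
    intervalIntegral.integral_congr fun τ hτ => by
      have hτJ := hJ.uIcc_subset h0 hr hτ
      simp only [hX τ hτJ θ, one_div, Real.rpow_inv_rpow (hηθpos τ hτJ θ).le hγ]
  rw [hY r hr θ, hderiv, hint]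

theorem ordConnected_setOf_nonneg_coe_lt (T : EReal) :
    {t : ℝ | 0 ≤ t ∧ (t : EReal) < T}.OrdConnected :=
  ⟨fun _ hx _ hy _ hz => ⟨hx.1.trans hz.1, (EReal.coe_le_coe_iff.2 hz.2).trans_lt hy.2⟩⟩

theorem uniqueDiffOn_setOf_nonneg_coe_lt {T : EReal} (hT : 0 < T) :
    UniqueDiffOn ℝ {t : ℝ | 0 ≤ t ∧ (t : EReal) < T} := by
  obtain ⟨c, hc0, hcT⟩ := EReal.lt_iff_exists_real_btwn.1 hT
  have hc : 0 < c := by exact_mod_cast hc0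
  have hsub : Ioo 0 c ⊆ {t : ℝ | 0 ≤ t ∧ (t : EReal) < T} :=
    fun r hr => ⟨hr.1.le, (EReal.coe_lt_coe_iff.2 hr.2).trans hcT⟩
  refine uniqueDiffOn_convex (ordConnected_setOf_nonneg_coe_lt T).convex
    ⟨c / 2, interior_mono hsub ?_⟩
  rw [isOpen_Ioo.interior_eq]
  constructor <;> linarith

theorem stmt_6_general (lam : ℝ) (hlam : lam ≠ 1) (γ : ℝ) (hγ : γ = 2 / (lam - 1))
    (σ : ℝ) (u₀ : ℝ → ℝ)
    (T : EReal) (hT : 0 < T)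
    (J : Set ℝ) (hJ : J = {t : ℝ | 0 ≤ t ∧ (t : EReal) < T})
    (η ηt ηθ ηtθ ηθθ ηttθ ηtθθ : ℝ → ℝ → ℝ)
    (hη0 : ∀ θ : ℝ, η 0 θ = θ)
    (hηt0 : ∀ θ : ℝ, ηt 0 θ = u₀ θ)
    (hηθpos : ∀ t ∈ J, ∀ θ : ℝ, 0 < ηθ t θ)
    (hηθ : ∀ t ∈ J, ∀ θ : ℝ, HasDerivAt (η t) (ηθ t θ) θ)
    (hηtθ : ∀ t ∈ J, ∀ θ : ℝ, HasDerivAt (ηt t) (ηtθ t θ) θ)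
    (hηθθ : ∀ t ∈ J, ∀ θ : ℝ, HasDerivAt (ηθ t) (ηθθ t θ) θ)
    (hηθt : ∀ θ : ℝ, ∀ t ∈ J, HasDerivWithinAt (fun s => ηθ s θ) (ηtθ t θ) J t)
    (hηttθ : ∀ θ : ℝ, ∀ t ∈ J, HasDerivWithinAt (fun s => ηtθ s θ) (ηttθ t θ) J t)
    (hηtθθ : ∀ t ∈ J, ∀ θ : ℝ, HasDerivAt (ηtθ t) (ηtθθ t θ) θ)
    (hηθθt : ∀ θ : ℝ, ∀ t ∈ J, HasDerivWithinAt (fun s => ηθθ s θ) (ηtθθ t θ) J t)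
    (hηθc : ContinuousOn (fun p : ℝ × ℝ => ηθ p.1 p.2) (J ×ˢ univ))
    (hηtθc : ContinuousOn (fun p : ℝ × ℝ => ηtθ p.1 p.2) (J ×ˢ univ))
    (hηθθc : ContinuousOn (fun p : ℝ × ℝ => ηθθ p.1 p.2) (J ×ˢ univ))
    (hηttθc : ContinuousOn (fun p : ℝ × ℝ => ηttθ p.1 p.2) (J ×ˢ univ))
    (hηtθθc : ContinuousOn (fun p : ℝ × ℝ => ηtθθ p.1 p.2) (J ×ˢ univ))
    -- the Lagrangian form of the μ-λ equation
    (hPDE : ∀ t ∈ J, ∀ θ : ℝ, ηttθ t θ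
        = -((lam - 3) / 2) * ηtθ t θ ^ 2 / ηθ t θ
          + (lam * σ * (ηt t θ - σ)
              + (lam - 3) / 2 * (∫ φ in (0:ℝ)..1, ηtθ t φ ^ 2 / ηθ t φ)) * ηθ t θ) :
    -- for the solar variables x = η_θ^{1/γ}, y = -γ x_θ + σ x ∫₀ᵗ x^γ dτ,
    -- with time derivatives Xt, Yt:
    ∀ X Xt Y Yt : ℝ → ℝ → ℝ,
      (∀ t ∈ J, ∀ θ : ℝ, X t θ = ηθ t θ ^ (1 / γ)) →
      (∀ t ∈ J, ∀ θ : ℝ,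
        Y t θ = -γ * deriv (X t) θ + σ * X t θ * ∫ τ in (0:ℝ)..t, X τ θ ^ γ) →
      (∀ θ : ℝ, ∀ t ∈ J, HasDerivWithinAt (fun s => X s θ) (Xt t θ) J t) →
      (∀ θ : ℝ, ∀ t ∈ J, HasDerivWithinAt (fun s => Y s θ) (Yt t θ) J t) →
      ∀ t ∈ J, ∀ θ : ℝ,
        X t θ * Yt t θ - Y t θ * Xt t θ = σ - deriv (deriv u₀) θ ∧
        X t θ * Yt t θ - Y t θ * Xt t θ
          = σ * ηθ t θ ^ lam
            - ηθ t θ ^ (lam - 1) * deriv (fun ψ => ηtθ t ψ / ηθ t ψ) θ := by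
  intro X Xt Y Yt hX hY hXt hYt t ht θ
  have hJc : J.OrdConnected := hJ ▸ ordConnected_setOf_nonneg_coe_lt T
  have hJu : UniqueDiffOn ℝ J := hJ ▸ uniqueDiffOn_setOf_nonneg_coe_lt hT
  have h0 : (0 : ℝ) ∈ J := hJ ▸ ⟨le_rfl, by exact_mod_cast hT⟩
  have hγ0 : γ ≠ 0 := hγ ▸ div_ne_zero two_ne_zero (sub_ne_zero.2 hlam)
  have hW := wronskian_eq_of_solar (hJu t ht) ht hγ0 (hηθpos t ht θ) (hηθt θ t ht)
    (hηθθt θ t ht) (hasDerivWithinAt_integral_of_ordConnected hJc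
      (hηθc.uncurry_right θ (mem_univ θ)) h0 ht)
    (fun r hr => hX r hr θ) (fun r hr => solar_y_eq hJc h0 hγ0 hηθpos hηθθ hX hY hr)
    (hXt θ t ht) (hYt θ t ht)
  rw [show 2 / γ = lam - 1 by rw [hγ, div_div_cancel₀ two_ne_zero], sub_add_cancel] at hW
  have hcons := momentum_eq_of_hasDerivWithinAt hJc (fun r hr => hηθpos r hr θ)
    (fun r hr => hηθt θ r hr) (fun r hr => hasDerivWithinAt_ratio_deriv hJc hηθpos hηtθ hηθθ
      hηθt hηttθ hηtθθ hηθc hηtθc hηθθc hηttθc hηtθθc hPDE hr θ) h0 ht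
  have hinit := momentum_eq_of_id (σ := σ) (lam := lam)
    (fun ψ => funext hη0 ▸ hηθ 0 h0 ψ) (hηθθ 0 h0 θ)
    (fun ψ => funext hηt0 ▸ hηtθ 0 h0 ψ) (hηtθθ 0 h0 θ)
  have hratio : HasDerivAt (fun ψ => ηtθ t ψ / ηθ t ψ)
      ((ηtθθ t θ * ηθ t θ - ηtθ t θ * ηθθ t θ) / ηθ t θ ^ 2) θ :=
    (hηtθθ t ht θ).div (hηθθ t ht θ) (hηθpos t ht θ).ne'
  exact ⟨hW.trans (hcons.trans hinit), by rw [hratio.deriv]; exact hW⟩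

/-- the angular momentum x y_t - y x_t of the solar model is conserved
and equals the initial momentum m₀ = σ - u₀''; moreover it satisfies the identity
x y_t - y x_t = σ η_θ^λ - η_θ^{λ-1} ∂_θ(η_tθ/η_θ). -/
theorem stmt_6 (lam : ℝ) (hlam : lam ≠ 1) (γ : ℝ) (hγ : γ = 2 / (lam - 1))
    (σ : ℝ) (u₀ : ℝ → ℝ) (hu₀ : ContDiff ℝ 2 u₀) (hu₀per : ∀ θ : ℝ, u₀ (θ + 1) = u₀ θ)
    (T : EReal) (hT : 0 < T)
    (J : Set ℝ) (hJ : J = {t : ℝ | 0 ≤ t ∧ (t : EReal) < T})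
    (η ηt ηθ ηtθ ηθθ ηttθ ηtθθ : ℝ → ℝ → ℝ)
    (hη0 : ∀ θ : ℝ, η 0 θ = θ)
    (hηt0 : ∀ θ : ℝ, ηt 0 θ = u₀ θ)
    (hηper : ∀ t ∈ J, ∀ θ : ℝ, η t (θ + 1) = η t θ + 1)
    (hηθpos : ∀ t ∈ J, ∀ θ : ℝ, 0 < ηθ t θ)
    (hηt : ∀ θ : ℝ, ∀ t ∈ J, HasDerivWithinAt (fun s => η s θ) (ηt t θ) J t)
    (hηθ : ∀ t ∈ J, ∀ θ : ℝ, HasDerivAt (η t) (ηθ t θ) θ)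
    (hηtθ : ∀ t ∈ J, ∀ θ : ℝ, HasDerivAt (ηt t) (ηtθ t θ) θ)
    (hηθθ : ∀ t ∈ J, ∀ θ : ℝ, HasDerivAt (ηθ t) (ηθθ t θ) θ)
    (hηθt : ∀ θ : ℝ, ∀ t ∈ J, HasDerivWithinAt (fun s => ηθ s θ) (ηtθ t θ) J t)
    (hηttθ : ∀ θ : ℝ, ∀ t ∈ J, HasDerivWithinAt (fun s => ηtθ s θ) (ηttθ t θ) J t)
    (hηtθθ : ∀ t ∈ J, ∀ θ : ℝ, HasDerivAt (ηtθ t) (ηtθθ t θ) θ)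
    (hηθθt : ∀ θ : ℝ, ∀ t ∈ J, HasDerivWithinAt (fun s => ηθθ s θ) (ηtθθ t θ) J t)
    (hηθc : ContinuousOn (fun p : ℝ × ℝ => ηθ p.1 p.2) (J ×ˢ univ))
    (hηtθc : ContinuousOn (fun p : ℝ × ℝ => ηtθ p.1 p.2) (J ×ˢ univ))
    (hηθθc : ContinuousOn (fun p : ℝ × ℝ => ηθθ p.1 p.2) (J ×ˢ univ))
    (hηttθc : ContinuousOn (fun p : ℝ × ℝ => ηttθ p.1 p.2) (J ×ˢ univ))
    (hηtθθc : ContinuousOn (fun p : ℝ × ℝ => ηtθθ p.1 p.2) (J ×ˢ univ))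
    -- the Lagrangian form of the μ-λ equation
    (hPDE : ∀ t ∈ J, ∀ θ : ℝ, ηttθ t θ
        = -((lam - 3) / 2) * ηtθ t θ ^ 2 / ηθ t θ
          + (lam * σ * (ηt t θ - σ)
              + (lam - 3) / 2 * (∫ φ in (0:ℝ)..1, ηtθ t φ ^ 2 / ηθ t φ)) * ηθ t θ) :
    -- for the solar variables x = η_θ^{1/γ}, y = -γ x_θ + σ x ∫₀ᵗ x^γ dτ,
    -- with time derivatives Xt, Yt:
    ∀ X Xt Y Yt : ℝ → ℝ → ℝ,
      (∀ t ∈ J, ∀ θ : ℝ, X t θ = ηθ t θ ^ (1 / γ)) →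
      (∀ t ∈ J, ∀ θ : ℝ,
        Y t θ = -γ * deriv (X t) θ + σ * X t θ * ∫ τ in (0:ℝ)..t, X τ θ ^ γ) →
      (∀ θ : ℝ, ∀ t ∈ J, HasDerivWithinAt (fun s => X s θ) (Xt t θ) J t) →
      (∀ θ : ℝ, ∀ t ∈ J, HasDerivWithinAt (fun s => Y s θ) (Yt t θ) J t) →
      ∀ t ∈ J, ∀ θ : ℝ,
        X t θ * Yt t θ - Y t θ * Xt t θ = σ - deriv (deriv u₀) θ ∧
        X t θ * Yt t θ - Y t θ * Xt t θ
          = σ * ηθ t θ ^ lam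
            - ηθ t θ ^ (lam - 1) * deriv (fun ψ => ηtθ t ψ / ηθ t ψ) θ :=
  stmt_6_general lam hlam γ hγ σ u₀ T hT J hJ η ηt ηθ ηtθ ηθθ ηttθ ηtθθ hη0 hηt0 hηθpos hηθ hηtθ
    hηθθ hηθt hηttθ hηtθθ hηθθt hηθc hηtθc hηθθc hηttθc hηtθθc hPDE
end
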